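/- arXiv:1912.06063 — 5 statements merged into one kernel-verified Lean document; each statement's English description precedes it below -/
import Mathlib

section
/- (Lemma 2.3) Assume |v| ≤ 1/3, |E| ≤ λ/3 + 2√λ, λ sufficiently large. Fix x ∈ 𝕋, r ∈ ℝ ∪ {∞}, and let r_1, r_2, … be the projective iterates r_{j+1} = λv(T^j x) - E - 1/r_j. If for some N ≥ 1 there are at most k indices j ∈ [1,N] with |r_j| < √λ, then: |r₁ ⋯ r_N| ≥ (√λ)^{N-3k} provided |r_N| ≥ 1/λ, and |r₁ ⋯ r_{N+1}| ≥ (√λ)^{N+1-3k} provided |r_N| < 1/λ. -/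
open scoped Classical

/-- (Lemma 2.3) Assume `|v| ≤ 1/3`, `|E| ≤ λ/3 + 2√λ` and `λ`
sufficiently large.  The projective iterates `r_{j+1} = λ v(T^j x) - E - 1/r_j`
(with values in `ℝ ∪ {∞}`) are encoded by projective coordinate pairs
`p_j ∈ ℝ² \ {0}` with `p_{j+1} = ((p_j)_2, (λ v(T^j x) - E)(p_j)_2 - (p_j)_1)` and
`r_j = (p_j)_2/(p_j)_1`; thus `|r_j| < √λ` reads `|(p_j)_2| < √λ |(p_j)_1|`, and
`|r_1 ⋯ r_N| = |(p_{N+1})_1| / |(p_1)_1|`.  If for some `N ≥ 1` there are at most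
`k` indices `j ∈ [1,N]` with `|r_j| < √λ`, then `|r_1 ⋯ r_N| ≥ (√λ)^{N-3k}`
provided `|r_N| ≥ 1/λ`, and `|r_1 ⋯ r_{N+1}| ≥ (√λ)^{N+1-3k}` provided
`|r_N| < 1/λ`. -/
theorem stmt_9 : ∃ lam0 : ℝ, 0 < lam0 ∧
    ∀ {α : Type} (T : α → α) (v : α → ℝ), (∀ y, |v y| ≤ 1 / 3) →
    ∀ lam E : ℝ, lam0 ≤ lam → |E| ≤ lam / 3 + 2 * Real.sqrt lam →
    ∀ (x : α) (p : ℕ → ℝ × ℝ), (p 0 ≠ (0, 0)) →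
    (∀ j : ℕ, p (j + 1) =
      ((p j).2, (lam * v (T^[j] x) - E) * (p j).2 - (p j).1)) →
    ∀ N : ℕ, 1 ≤ N → ∀ k : ℕ,
    ((Finset.Icc 1 N).filter
        (fun j => |(p j).2| < Real.sqrt lam * |(p j).1|)).card ≤ k →
    ((1 / lam) * |(p N).1| ≤ |(p N).2| →
        Real.sqrt lam ^ ((N : ℤ) - 3 * k) * |(p 1).1| ≤ |(p (N + 1)).1|) ∧
    (|(p N).2| < (1 / lam) * |(p N).1| →
        Real.sqrt lam ^ ((N : ℤ) + 1 - 3 * k) * |(p 1).1| ≤ |(p (N + 2)).1|) := by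
  refine ⟨100, by norm_num, ?_⟩
  intro α T v hv lam E hlam hE x p hp0 hrec N hN
  set s := Real.sqrt lam with hs_def
  have hlam0 : (0 : ℝ) < lam := by linarith
  have hs10 : (10 : ℝ) ≤ s := by
    have h := Real.sqrt_le_sqrt hlam
    rwa [show (100 : ℝ) = 10 ^ 2 by norm_num, Real.sqrt_sq (by norm_num : (0:ℝ) ≤ 10)] at h
  have hs0 : (0 : ℝ) < s := by linarith
  have hs1 : (1 : ℝ) ≤ s := by linarith
  have hssq : s * s = lam := Real.mul_self_sqrt hlam0.le
  have h2z : s ^ (2 : ℤ) = lam := by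
    rw [show (2 : ℤ) = 1 + 1 from rfl, zpow_add₀ hs0.ne', zpow_one, hssq]
  have hneg2 : s ^ (-2 : ℤ) = lam⁻¹ := by rw [zpow_neg, h2z]
  have hmono : ∀ e e' : ℤ, e ≤ e' → s ^ e ≤ s ^ e' := fun e e' h =>
    zpow_le_zpow_right₀ hs1 h
  -- coordinates of the recursion
  have hfst : ∀ j, (p (j + 1)).1 = (p j).2 := fun j => by rw [hrec j]
  have hc : ∀ j, |lam * v (T^[j] x) - E| ≤ 2 * lam / 3 + 2 * s := by
    intro j
    have h1 : |lam * v (T^[j] x)| ≤ lam / 3 := by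
      rw [abs_mul, abs_of_pos hlam0]
      nlinarith [hv (T^[j] x), abs_nonneg (v (T^[j] x))]
    calc |lam * v (T^[j] x) - E| = |lam * v (T^[j] x) + -E| := by rw [sub_eq_add_neg]
      _ ≤ |lam * v (T^[j] x)| + |-E| := abs_add_le _ _
      _ ≤ lam / 3 + (lam / 3 + 2 * s) := by rw [abs_neg]; linarith
      _ = 2 * lam / 3 + 2 * s := by ring
  -- key one-step estimate after a very small index
  have key : ∀ j, |(p j).2| < (1 / lam) * |(p j).1| →
      s⁻¹ * |(p j).1| ≤ |(p (j + 1)).2| := by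
    intro j hj
    rw [hrec j]
    set c := lam * v (T^[j] x) - E with hcdef
    set a := (p j).1
    set b := (p j).2
    have hb' : lam * |b| ≤ |a| := by
      have h := hj.le
      calc lam * |b| ≤ lam * ((1 / lam) * |a|) :=
            mul_le_mul_of_nonneg_left h hlam0.le
        _ = |a| := by field_simp
    have h1 : |a| - |c * b| ≤ |c * b - a| := by
      have h := abs_sub_abs_le_abs_sub a (c * b)
      rwa [abs_sub_comm] at h
    have h2 : lam * |c * b| ≤ (2 * lam / 3 + 2 * s) * |a| := by
      rw [abs_mul]
      calc lam * (|c| * |b|) = |c| * (lam * |b|) := by ring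
        _ ≤ (2 * lam / 3 + 2 * s) * |a| :=
            mul_le_mul (hc j) hb' (by positivity) (by positivity)
    have h5 : s * |c * b| ≤ (2 * s / 3 + 2) * |a| := by
      have h6 := mul_le_mul_of_nonneg_left h2 hs0.le
      rw [← hssq] at h6
      have h7 : (s * s) * (s * |c * b|) ≤ (s * s) * ((2 * s / 3 + 2) * |a|) := by
        calc (s * s) * (s * |c * b|) = s * (s * s * |c * b|) := by ring
          _ ≤ s * ((2 * (s * s) / 3 + 2 * s) * |a|) := h6
          _ = (s * s) * ((2 * s / 3 + 2) * |a|) := by ring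
      exact le_of_mul_le_mul_left h7 (by positivity)
    show s⁻¹ * |a| ≤ |c * b - a|
    rw [inv_mul_le_iff₀ hs0]
    nlinarith [mul_le_mul_of_nonneg_left h1 hs0.le, h5,
      mul_nonneg (by linarith : (0:ℝ) ≤ s / 3 - 3) (abs_nonneg a)]
  -- a very small index forces positivity of the first coordinate
  have hpos_of_small : ∀ j, |(p j).2| < (1 / lam) * |(p j).1| → 0 < |(p j).1| := by
    intro j hj
    rcases (abs_nonneg (p j).1).lt_or_eq with h | h
    · exact h
    · exfalso
      rw [← h, mul_zero] at hj
      exact absurd hj (abs_nonneg _).not_gt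
  -- a very small index is small
  have hsmall_of_vsmall : ∀ j, |(p j).2| < (1 / lam) * |(p j).1| →
      |(p j).2| < s * |(p j).1| := by
    intro j hj
    have h1 := hpos_of_small j hj
    have : (1 / lam) * |(p j).1| ≤ s * |(p j).1| := by
      apply mul_le_mul_of_nonneg_right _ (abs_nonneg _)
      rw [div_le_iff₀ hlam0]
      nlinarith
    linarith
  induction N, hN using Nat.le_induction with
  | base =>
    intro k hk
    constructor
    · -- (A) at N = 1
      intro hA
      rw [hfst 1]
      by_cases hsm : |(p 1).2| < s * |(p 1).1|
      · have hk1 : 1 ≤ k := by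
          refine le_trans ?_ hk
          have hmem : (1 : ℕ) ∈ (Finset.Icc 1 1).filter
              (fun j => |(p j).2| < s * |(p j).1|) := by
            simp [Finset.mem_filter, hsm]
          exact Finset.card_pos.mpr ⟨1, hmem⟩
        have he : ((1 : ℕ) : ℤ) - 3 * k ≤ -2 := by
          have : (1 : ℤ) ≤ (k : ℤ) := by exact_mod_cast hk1
          omega
        calc s ^ (((1 : ℕ) : ℤ) - 3 * (k : ℤ)) * |(p 1).1|
            ≤ s ^ (-2 : ℤ) * |(p 1).1| :=
              mul_le_mul_of_nonneg_right (hmono _ _ he) (abs_nonneg _)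
          _ = (1 / lam) * |(p 1).1| := by rw [hneg2, one_div]
          _ ≤ |(p 1).2| := hA
      · push_neg at hsm
        have he : ((1 : ℕ) : ℤ) - 3 * k ≤ 1 := by omega
        calc s ^ (((1 : ℕ) : ℤ) - 3 * (k : ℤ)) * |(p 1).1|
            ≤ s ^ (1 : ℤ) * |(p 1).1| :=
              mul_le_mul_of_nonneg_right (hmono _ _ he) (abs_nonneg _)
          _ = s * |(p 1).1| := by rw [zpow_one]
          _ ≤ |(p 1).2| := hsm
    · -- (B) at N = 1
      intro hB
      have hsm := hsmall_of_vsmall 1 hB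
      have hk1 : 1 ≤ k := by
        refine le_trans ?_ hk
        have hmem : (1 : ℕ) ∈ (Finset.Icc 1 1).filter
            (fun j => |(p j).2| < s * |(p j).1|) := by
          simp [Finset.mem_filter, hsm]
        exact Finset.card_pos.mpr ⟨1, hmem⟩
      have he : ((1 : ℕ) : ℤ) + 1 - 3 * k ≤ -1 := by
        have : (1 : ℤ) ≤ (k : ℤ) := by exact_mod_cast hk1
        omega
      have hkey := key 1 hB
      rw [show (1 : ℕ) + 2 = (1 + 1) + 1 from rfl, hfst (1 + 1)]
      calc s ^ (((1 : ℕ) : ℤ) + 1 - 3 * (k : ℤ)) * |(p 1).1|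
          ≤ s ^ (-1 : ℤ) * |(p 1).1| :=
            mul_le_mul_of_nonneg_right (hmono _ _ he) (abs_nonneg _)
        _ = s⁻¹ * |(p 1).1| := by rw [zpow_neg, zpow_one]
        _ ≤ |(p (1 + 1)).2| := hkey
  | succ M hM IH =>
    intro k hk
    set N := M + 1 with hNdef
    have hNz : (N : ℤ) = (M : ℤ) + 1 := by rw [hNdef]; push_cast; ring
    -- subset relation between the filtered sets
    have hsub : (Finset.Icc 1 M).filter (fun j => |(p j).2| < s * |(p j).1|) ⊆
        (Finset.Icc 1 N).filter (fun j => |(p j).2| < s * |(p j).1|) :=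
      Finset.filter_subset_filter _ (Finset.Icc_subset_Icc_right (Nat.le_succ M))
    have hcardM : ((Finset.Icc 1 M).filter
        (fun j => |(p j).2| < s * |(p j).1|)).card ≤ k :=
      le_trans (Finset.card_le_card hsub) hk
    -- if N itself is small, we can improve the count on `Icc 1 M`
    have hcard_small : |(p N).2| < s * |(p N).1| →
        ((Finset.Icc 1 M).filter
          (fun j => |(p j).2| < s * |(p j).1|)).card + 1 ≤ k := by
      intro hsm
      have hNin : N ∈ (Finset.Icc 1 N).filter
          (fun j => |(p j).2| < s * |(p j).1|) := by
        simp only [Finset.mem_filter, Finset.mem_Icc]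
        exact ⟨⟨by omega, le_refl N⟩, hsm⟩
      have hNout : N ∉ (Finset.Icc 1 M).filter
          (fun j => |(p j).2| < s * |(p j).1|) := by
        simp [Finset.mem_filter, Finset.mem_Icc, hNdef]
      have hss : (Finset.Icc 1 M).filter (fun j => |(p j).2| < s * |(p j).1|) ⊂
          (Finset.Icc 1 N).filter (fun j => |(p j).2| < s * |(p j).1|) :=
        (Finset.ssubset_iff_of_subset hsub).mpr ⟨N, hNin, hNout⟩
      have := Finset.card_lt_card hss
      omega
    constructor
    · -- (A) at N = M + 1
      intro hA
      by_cases hvs : |(p M).2| < (1 / lam) * |(p M).1|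
      · -- very small previous index: use (B) of the IH
        have hIH := (IH k hcardM).2 hvs
        have he : ((M : ℤ) + 1 - 3 * k) = ((N : ℤ) - 3 * k) := by
          omega
        have hMN : M + 2 = N + 1 := by omega
        rw [he, hMN] at hIH
        exact hIH
      · push_neg at hvs
        by_cases hsm : |(p N).2| < s * |(p N).1|
        · -- N small: lose a factor λ⁻¹, gain one unit of k
          have hcard := hcard_small hsm
          have hk1 : 1 ≤ k := by omega
          have hcard' : ((Finset.Icc 1 M).filter
              (fun j => |(p j).2| < s * |(p j).1|)).card ≤ k - 1 := by omega
          have hIH := (IH (k - 1) hcard').1 hvs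
          have hkz : ((k - 1 : ℕ) : ℤ) = (k : ℤ) - 1 := by omega
          rw [hkz] at hIH
          have he : ((N : ℤ) - 3 * k) = ((M : ℤ) - 3 * ((k : ℤ) - 1)) + (-2) := by
            omega
          rw [hfst N, he, zpow_add₀ hs0.ne', hneg2]
          calc s ^ ((M : ℤ) - 3 * ((k : ℤ) - 1)) * lam⁻¹ * |(p 1).1|
              = lam⁻¹ * (s ^ ((M : ℤ) - 3 * ((k : ℤ) - 1)) * |(p 1).1|) := by ring
            _ ≤ lam⁻¹ * |(p N).1| := by
                apply mul_le_mul_of_nonneg_left hIH (by positivity)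
            _ = (1 / lam) * |(p N).1| := by rw [one_div]
            _ ≤ |(p N).2| := hA
        · -- N not small: gain a factor s
          push_neg at hsm
          have hIH := (IH k hcardM).1 hvs
          have he : ((N : ℤ) - 3 * k) = ((M : ℤ) - 3 * (k : ℤ)) + 1 := by
            omega
          rw [hfst N, he, zpow_add₀ hs0.ne', zpow_one]
          calc s ^ ((M : ℤ) - 3 * (k : ℤ)) * s * |(p 1).1|
              = s * (s ^ ((M : ℤ) - 3 * (k : ℤ)) * |(p 1).1|) := by ring
            _ ≤ s * |(p N).1| := mul_le_mul_of_nonneg_left hIH hs0.le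
            _ ≤ |(p N).2| := hsm
    · -- (B) at N = M + 1
      intro hB
      have hsm := hsmall_of_vsmall N hB
      have hcard := hcard_small hsm
      have hk1 : 1 ≤ k := by omega
      have hcard' : ((Finset.Icc 1 M).filter
          (fun j => |(p j).2| < s * |(p j).1|)).card ≤ k - 1 := by omega
      by_cases hvs : |(p M).2| < (1 / lam) * |(p M).1|
      · -- impossible: two consecutive very small indices
        exfalso
        have hposM := hpos_of_small M hvs
        have h1 : s⁻¹ * |(p M).1| ≤ |(p N).2| := key M hvs
        rw [inv_mul_le_iff₀ hs0] at h1
        have h3 : |(p N).1| < (1 / lam) * |(p M).1| := by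
          have hN1 : (p N).1 = (p M).2 := hfst M
          rw [hN1]; exact hvs
        have h2' : lam * |(p N).2| < |(p N).1| := by
          have h := mul_lt_mul_of_pos_left hB hlam0
          calc lam * |(p N).2| < lam * ((1 / lam) * |(p N).1|) := h
            _ = |(p N).1| := by field_simp
        have h3' : lam * |(p N).1| < |(p M).1| := by
          have h := mul_lt_mul_of_pos_left h3 hlam0
          calc lam * |(p N).1| < lam * ((1 / lam) * |(p M).1|) := h
            _ = |(p M).1| := by field_simp
        nlinarith [mul_lt_mul_of_pos_left h2' hlam0, h1, h3', hposM,
          abs_nonneg (p N).2, abs_nonneg (p N).1, hssq, hs10, hlam0,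
          mul_pos hlam0 hlam0]
      · push_neg at hvs
        have hIH := (IH (k - 1) hcard').1 hvs
        have hkz : ((k - 1 : ℕ) : ℤ) = (k : ℤ) - 1 := by omega
        rw [hkz] at hIH
        have hkey := key N hB
        have he : ((N : ℤ) + 1 - 3 * k) = ((M : ℤ) - 3 * ((k : ℤ) - 1)) + (-1) := by
          omega
        rw [show N + 2 = (N + 1) + 1 from rfl, hfst (N + 1), he,
          zpow_add₀ hs0.ne', zpow_neg, zpow_one]
        calc s ^ ((M : ℤ) - 3 * ((k : ℤ) - 1)) * s⁻¹ * |(p 1).1|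
            = s⁻¹ * (s ^ ((M : ℤ) - 3 * ((k : ℤ) - 1)) * |(p 1).1|) := by ring
          _ ≤ s⁻¹ * |(p N).1| := by
              apply mul_le_mul_of_nonneg_left hIH (by positivity)
          _ ≤ |(p (N + 1)).2| := hkey
end

section
/- Every non-constant real-analytic function v : 𝕋 → ℝ belongs to the class 𝒱¹(𝕋, ℝ): there exist ε₀ > 0, β > 0 and an integer s ≥ 1 such that for all 0 < ε ≤ ε₀ and all a ∈ ℝ, the set {x ∈ 𝕋 : |v(x) - a| < ε} consists of at most s intervals, each of length at most ε^β. -/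
/-!
On `[0, 1]` the zeros of `v'` are finitely many, say `k`, and a Łojasiewicz-type inequality holds:
`|v' x| ≥ c δ ^ M` whenever `x` is at distance `δ ≤ 1` from every zero of `v'`. Cut an interval on
which `|v - a| < ε` into `k + 1` equal pieces; one of them contains no zero of `v'`, and the mean
value theorem on its middle third gives `c δ ^ (M + 1) < 2 ε`. So these intervals have length
`O(ε ^ (1 / (M + 1)))`, which is at most `ε ^ (1 / (M + 2))` for small `ε`.

Distinct connected components of a subset of `ℝ` have distinct infima, and the infimum of a
component of the sublevel set in `[0, 1)` is `0`, `1` or a solution of `v = a ± ε`. By Rolle each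
level set of `v` in `[0, 1]` has at most `k + 1` points, so there are at most `2 k + 4` components.
-/

open Set Filter Topology

section Components

variable {α : Type*} [ConditionallyCompleteLinearOrder α] {s t A : Set α} {x y : α}

theorem Icc_subset_union_of_csInf_eq (hs : BddBelow s) (ht : t.OrdConnected)
    (h : sInf s = sInf t) (hx : x ∈ s) (hy : y ∈ t) : Icc x y ⊆ s ∪ t := by
  rintro z ⟨hxz, hzy⟩
  rcases hxz.eq_or_lt with rfl | hxz
  · exact Or.inl hx
  obtain ⟨w, hw, hwz⟩ := exists_lt_of_csInf_lt ⟨y, hy⟩ ((h ▸ csInf_le hs hx).trans_lt hxz)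
  exact Or.inr (ht.out hw hy ⟨hwz.le, hzy⟩)

theorem Set.OrdConnected.union_of_csInf_eq (hs : s.OrdConnected) (ht : t.OrdConnected)
    (hs' : BddBelow s) (ht' : BddBelow t) (h : sInf s = sInf t) : (s ∪ t).OrdConnected := by
  refine ⟨fun x hx y hy => ?_⟩
  rcases hx with hx | hx <;> rcases hy with hy | hy
  · exact (hs.out hx hy).trans subset_union_left
  · exact Icc_subset_union_of_csInf_eq hs' ht h hx hy
  · exact union_comm s t ▸ Icc_subset_union_of_csInf_eq ht' hs h.symm hx hy
  · exact (ht.out hx hy).trans subset_union_right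

variable [TopologicalSpace α] [OrderTopology α] [DenselyOrdered α]

theorem connectedComponentIn_eq_of_csInf_eq (hA : BddBelow A) (hx : x ∈ A) (hy : y ∈ A)
    (h : sInf (connectedComponentIn A x) = sInf (connectedComponentIn A y)) :
    connectedComponentIn A x = connectedComponentIn A y := by
  have hunion := (isPreconnected_connectedComponentIn.ordConnected.union_of_csInf_eq
    isPreconnected_connectedComponentIn.ordConnected (hA.mono (connectedComponentIn_subset A x))
    (hA.mono (connectedComponentIn_subset A y)) h).isPreconnected.subset_connectedComponentIn
    (Or.inl (mem_connectedComponentIn hx))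
    (union_subset (connectedComponentIn_subset A x) (connectedComponentIn_subset A y))
  exact connectedComponentIn_eq (hunion (Or.inr (mem_connectedComponentIn hy)))

theorem finite_and_ncard_image_connectedComponentIn_le {S : Set α} (hA : BddBelow A) (hS : S.Finite)
    (h : ∀ x ∈ A, sInf (connectedComponentIn A x) ∈ S) :
    (connectedComponentIn A '' A).Finite ∧ (connectedComponentIn A '' A).ncard ≤ S.ncard := by
  have hinj : InjOn sInf (connectedComponentIn A '' A) := by
    rintro _ ⟨x, hx, rfl⟩ _ ⟨y, hy, rfl⟩ hxy
    exact connectedComponentIn_eq_of_csInf_eq hA hx hy hxy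
  have himage : sInf '' (connectedComponentIn A '' A) ⊆ S := by
    rintro _ ⟨_, ⟨x, hx, rfl⟩, rfl⟩
    exact h x hx
  exact ⟨(hS.subset himage).of_finite_image hinj,
    hinj.ncard_image ▸ ncard_le_ncard himage hS⟩

variable [NoMinOrder α] [NoMaxOrder α]

theorem csInf_connectedComponentIn_notMem_interior (hA : BddBelow A) (hx : x ∈ A) :
    sInf (connectedComponentIn A x) ∉ interior A := by
  intro hp
  obtain ⟨l, u, ⟨hlp, hpu⟩, hlu⟩ :=
    mem_nhds_iff_exists_Ioo_subset.1 (mem_interior_iff_mem_nhds.1 hp)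
  have hCb : BddBelow (connectedComponentIn A x) := hA.mono (connectedComponentIn_subset A x)
  obtain ⟨y, hy, hyu⟩ := exists_lt_of_csInf_lt ⟨x, mem_connectedComponentIn hx⟩ hpu
  have hIoo : Ioo l u ⊆ connectedComponentIn A x := by
    rw [connectedComponentIn_eq hy]
    exact isPreconnected_Ioo.subset_connectedComponentIn ⟨hlp.trans_le (csInf_le hCb hy), hyu⟩ hlu
  obtain ⟨z, hlz, hzp⟩ := exists_between hlp
  exact (csInf_le hCb (hIoo ⟨hlz, hzp.trans hpu⟩)).not_gt hzp

theorem csInf_connectedComponentIn_mem_frontier (hA : BddBelow A) (hx : x ∈ A) :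
    sInf (connectedComponentIn A x) ∈ frontier A :=
  ⟨closure_mono (connectedComponentIn_subset A x)
    (csInf_mem_closure ⟨x, mem_connectedComponentIn hx⟩
      (hA.mono (connectedComponentIn_subset A x))),
    csInf_connectedComponentIn_notMem_interior hA hx⟩

end Components

section Analytic

variable {𝕜 E : Type*} [NontriviallyNormedField 𝕜] [NormedAddCommGroup E]
  {f : 𝕜 → E} {z : 𝕜}

def LowerBoundAwayFromZeros (f : 𝕜 → E) (c : ℝ) (n : ℕ) (x : 𝕜) : Prop :=
  ∀ δ : ℝ, 0 ≤ δ → δ ≤ 1 → (∀ w, f w = 0 → δ ≤ ‖x - w‖) → c * δ ^ n ≤ ‖f x‖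

theorem LowerBoundAwayFromZeros.mono {c c' : ℝ} {n n' : ℕ} {x : 𝕜}
    (h : LowerBoundAwayFromZeros f c n x) (hc' : 0 ≤ c') (hc : c' ≤ c) (hn : n ≤ n') :
    LowerBoundAwayFromZeros f c' n' x := fun δ hδ₀ hδ₁ hsep =>
  calc c' * δ ^ n' ≤ c * δ ^ n :=
        mul_le_mul hc (pow_le_pow_of_le_one hδ₀ hδ₁ hn) (by positivity) (hc'.trans hc)
    _ ≤ ‖f x‖ := h δ hδ₀ hδ₁ hsep

theorem IsCompact.exists_lowerBoundAwayFromZeros {K : Set 𝕜} (hK : IsCompact K)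
    (h : ∀ z ∈ K, ∃ n : ℕ, ∃ c > 0, ∀ᶠ x in 𝓝 z, LowerBoundAwayFromZeros f c n x) :
    ∃ n : ℕ, ∃ c > 0, ∀ x ∈ K, LowerBoundAwayFromZeros f c n x := by
  choose n c hc hnear using h
  obtain ⟨t, hKt⟩ := hK.elim_nhds_subcover' _ hnear
  obtain ⟨c₀, hc₀t, hc₀⟩ := (eventually_nhdsWithin_of_eventually_nhds ((eventually_all_finset t).2
    fun z _ => eventually_le_nhds (hc z z.2))).and (self_mem_nhdsWithin (s := Ioi 0)) |>.exists
  refine ⟨t.sup fun z => n z z.2, c₀, hc₀, fun x hx => ?_⟩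
  obtain ⟨z, hzt, hxz⟩ := mem_iUnion₂.1 (hKt hx)
  exact hxz.mono hc₀.le (hc₀t z hzt) (Finset.le_sup (f := fun z : K => n z z.2) hzt)

variable [NormedSpace 𝕜 E]

theorem AnalyticOnNhd.finite_inter_preimage_singleton [ConnectedSpace 𝕜] {K : Set 𝕜}
    (hf : AnalyticOnNhd 𝕜 f univ) (hK : IsCompact K) {b : E} (hb : ∃ x, f x ≠ b) :
    (K ∩ f ⁻¹' {b}).Finite := by
  obtain ⟨x, hx⟩ := hb
  have hcod := (hf.sub analyticOnNhd_const).preimage_zero_mem_codiscrete (sub_ne_zero.2 hx)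
  convert hK.finite_sdiff_of_mem_codiscreteWithin (codiscreteWithin_mono (subset_univ K) hcod)
    using 1
  ext y
  simp [sub_eq_zero]

theorem AnalyticAt.exists_mul_pow_le_norm (hf : AnalyticAt 𝕜 f z) (h : analyticOrderAt f z ≠ ⊤) :
    ∃ n : ℕ, ∃ c > 0, ∀ᶠ x in 𝓝 z, c * ‖x - z‖ ^ n ≤ ‖f x‖ := by
  lift analyticOrderAt f z to ℕ using h with n hn
  obtain ⟨g, hg, hgz, hfg⟩ := hf.analyticOrderAt_eq_natCast.1 hn.symm
  have hg_near : ∀ᶠ x in 𝓝 z, ‖g z‖ / 2 ≤ ‖g x‖ :=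
    hg.continuousAt.norm.eventually (eventually_ge_nhds (half_lt_self (norm_pos_iff.2 hgz)))
  refine ⟨n, ‖g z‖ / 2, by positivity, ?_⟩
  filter_upwards [hfg, hg_near] with x hfx hgx
  rw [hfx, norm_smul, norm_pow, mul_comm]
  gcongr

theorem AnalyticAt.exists_eventually_lowerBoundAwayFromZeros (hf : AnalyticAt 𝕜 f z)
    (h : analyticOrderAt f z ≠ ⊤) :
    ∃ n : ℕ, ∃ c > 0, ∀ᶠ x in 𝓝 z, LowerBoundAwayFromZeros f c n x := by
  by_cases hz : f z = 0
  · obtain ⟨n, c, hc, hnear⟩ := hf.exists_mul_pow_le_norm h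
    refine ⟨n, c, hc, ?_⟩
    filter_upwards [hnear] with x hx δ hδ₀ _ hsep
    calc c * δ ^ n ≤ c * ‖x - z‖ ^ n := by gcongr; exact hsep z hz
      _ ≤ ‖f x‖ := hx
  · refine ⟨0, ‖f z‖ / 2, by positivity, ?_⟩
    filter_upwards [hf.continuousAt.norm.eventually
      (eventually_ge_nhds (half_lt_self (norm_pos_iff.2 hz)))] with x hx δ _ _ _
    simpa using hx

-- Łojasiewicz-type inequality
theorem AnalyticOnNhd.exists_lowerBoundAwayFromZeros [ConnectedSpace 𝕜] {K : Set 𝕜}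
    (hf : AnalyticOnNhd 𝕜 f univ) (hK : IsCompact K) (hne : ∃ x, f x ≠ 0) :
    ∃ n : ℕ, ∃ c > 0, ∀ x ∈ K, LowerBoundAwayFromZeros f c n x := by
  refine hK.exists_lowerBoundAwayFromZeros fun z _ =>
    (hf z trivial).exists_eventually_lowerBoundAwayFromZeros fun htop => ?_
  obtain ⟨x, hx⟩ := hne
  exact hx (congrFun ((analyticOrderAt_eq_top_iff_eq_zero z fun w => hf w trivial).1 htop) x)

end Analytic

section RealEstimates

theorem exists_lt_forall_notMem_Ioo {Z : Set ℝ} (hZ : Z.Finite) (x : ℝ) {h : ℝ} (hh : 0 < h) :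
    ∃ i : ℕ, i < Z.ncard + 1 ∧ ∀ z ∈ Z, z ∉ Ioo (x + i * h) (x + (i + 1) * h) := by
  obtain ⟨i, hi, hiZ⟩ := exists_mem_notMem_of_ncard_lt_ncard
    (s := (fun z => ⌊(z - x) / h⌋₊) '' Z) (t := ↑(Finset.range (Z.ncard + 1)))
    (by rw [ncard_coe_finset, Finset.card_range]; exact Nat.lt_succ_of_le (ncard_image_le hZ))
    (hZ.image _)
  refine ⟨i, Finset.mem_range.1 hi, fun z hz hzi => hiZ ⟨z, hz, ?_⟩⟩
  have hi₀ : (0 : ℝ) ≤ i := i.cast_nonneg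
  rw [Nat.floor_eq_iff (by rw [le_div_iff₀ hh]; nlinarith [hzi.1]), le_div_iff₀ hh, div_lt_iff₀ hh]
  constructor <;> linarith [hzi.1, hzi.2]

theorem exists_abs_deriv_mul_lt {f : ℝ → ℝ} (hf : Differentiable ℝ f) {u w a ε : ℝ} (huw : u < w)
    (h : ∀ t ∈ Icc u w, |f t - a| < ε) : ∃ ξ ∈ Ioo u w, |deriv f ξ| * (w - u) < 2 * ε := by
  obtain ⟨ξ, hξ, hslope⟩ := exists_deriv_eq_slope f huw hf.continuous.continuousOn
    hf.differentiableOn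
  refine ⟨ξ, hξ, ?_⟩
  rw [hslope, abs_div, abs_of_pos (sub_pos.2 huw), div_mul_cancel₀ _ (sub_ne_zero.2 huw.ne')]
  have hu := abs_lt.1 (h u (left_mem_Icc.2 huw.le))
  have hw := abs_lt.1 (h w (right_mem_Icc.2 huw.le))
  exact abs_sub_lt_iff.2 ⟨by linarith, by linarith⟩

theorem mul_pow_lt_of_forall_abs_sub_lt {f : ℝ → ℝ} (hf : Differentiable ℝ f) {Z : Set ℝ}
    (hZ : Z.Finite) {c : ℝ} {M : ℕ} {a ε x y : ℝ} (hxy : x < y) (hyx : y - x ≤ 1)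
    (hcrit : ∀ t ∈ Icc x y, deriv f t = 0 → t ∈ Z)
    (hbound : ∀ t ∈ Icc x y, LowerBoundAwayFromZeros (deriv f) c M t)
    (hU : ∀ t ∈ Icc x y, |f t - a| < ε) :
    c * ((y - x) / (3 * (Z.ncard + 1))) ^ (M + 1) < 2 * ε := by
  set N : ℝ := Z.ncard + 1
  have hN : 1 ≤ N := le_add_of_nonneg_left (Nat.cast_nonneg _)
  set h := (y - x) / N
  have hh₀ : 0 < h := div_pos (sub_pos.2 hxy) (by linarith)
  have hNh : N * h = y - x := mul_div_cancel₀ _ (by linarith)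
  obtain ⟨i, hi, hfree⟩ := exists_lt_forall_notMem_Ioo hZ x hh₀
  have hi₀ : (0 : ℝ) ≤ i := i.cast_nonneg
  have hiN : (i : ℝ) + 1 ≤ N := by simp only [N]; exact_mod_cast hi
  set u := x + i * h
  have hxu : x ≤ u := by nlinarith
  have huy : u + h ≤ y := by nlinarith
  set δ := h / 3 with hδ
  have hδ₁ : δ ≤ 1 := by nlinarith
  obtain ⟨ξ, hξ, hξε⟩ := exists_abs_deriv_mul_lt hf (by linarith : u + δ < u + 2 * δ)
    fun t ht => hU t ⟨by linarith [ht.1], by linarith [ht.2]⟩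
  have hξxy : ξ ∈ Icc x y := ⟨by linarith [hξ.1], by linarith [hξ.2]⟩
  have hsep : ∀ w, deriv f w = 0 → δ ≤ ‖ξ - w‖ := by
    intro w hw
    rw [Real.norm_eq_abs]
    by_cases hwI : w ∈ Ioo u (u + h)
    · refine absurd (hcrit w ⟨by linarith [hwI.1], by linarith [hwI.2]⟩ hw) fun hwZ => ?_
      exact hfree w hwZ ⟨hwI.1, by linarith [hwI.2]⟩
    · rcases not_and_or.1 hwI with hw | hw
      · exact le_abs.2 (Or.inl (by linarith [hξ.1, not_lt.1 hw]))
      · exact le_abs.2 (Or.inr (by linarith [hξ.2, not_lt.1 hw]))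
  have hlow := hbound ξ hξxy δ (by positivity) hδ₁ hsep
  rw [Real.norm_eq_abs] at hlow
  calc c * ((y - x) / (3 * N)) ^ (M + 1) = c * δ ^ M * δ := by
        rw [← hNh, mul_comm 3 N, ← div_div, mul_div_cancel_left₀ _ (by positivity : N ≠ 0)]
        ring
    _ ≤ |deriv f ξ| * δ := by gcongr
    _ = |deriv f ξ| * (u + 2 * δ - (u + δ)) := by ring
    _ < 2 * ε := hξε

theorem le_rpow_inv_of_pow_le {L C ε : ℝ} {m : ℕ} (hL : 0 ≤ L) (hε : 0 ≤ ε) (hC : 0 ≤ C)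
    (h : L ^ (m + 1) ≤ C * ε) (hsmall : C ^ (m + 2) * ε ≤ 1) :
    L ≤ ε ^ ((m + 2 : ℕ) : ℝ)⁻¹ := by
  set t := ε ^ ((m + 2 : ℕ) : ℝ)⁻¹
  have ht : 0 ≤ t := Real.rpow_nonneg hε _
  have htε : t ^ (m + 2) = ε := Real.rpow_inv_natCast_pow (n := m + 2) hε (by omega)
  have hCt : C * t ≤ 1 :=
    (pow_le_one_iff_of_nonneg (n := m + 2) (by positivity) (by omega)).1 (by rwa [mul_pow, htε])
  refine (pow_le_pow_iff_left₀ hL ht (m.succ_ne_zero)).1 ?_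
  calc L ^ (m + 1) ≤ C * t ^ (m + 2) := htε ▸ h
    _ = C * t * t ^ (m + 1) := by ring
    _ ≤ t ^ (m + 1) := mul_le_of_le_one_left (by positivity) hCt

theorem ncard_inter_preimage_le_ncard_add_one {f : ℝ → ℝ} (hf : Continuous f) {I : Set ℝ}
    (hI : I.OrdConnected) {b : ℝ} (hb : (I ∩ f ⁻¹' {b}).Finite)
    (hZ : (I ∩ deriv f ⁻¹' {0}).Finite) :
    (I ∩ f ⁻¹' {b}).ncard ≤ (I ∩ deriv f ⁻¹' {0}).ncard + 1 := by
  rw [ncard_eq_toFinset_card _ hb, ncard_eq_toFinset_card _ hZ]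
  refine Finset.card_le_of_interleaved fun x hx y hy hxy _ => ?_
  rw [Finite.mem_toFinset] at hx hy
  obtain ⟨z, hz, hz'⟩ := exists_deriv_eq_zero hxy hf.continuousOn (hx.2.trans hy.2.symm)
  exact ⟨z, (Finite.mem_toFinset _).2 ⟨hI.out hx.1 hy.1 (Ioo_subset_Icc_self hz), hz'⟩, hz⟩

theorem ediam_le_ofReal_of_forall_sub_le {s : Set ℝ} {r : ℝ}
    (h : ∀ x ∈ s, ∀ y ∈ s, x ≤ y → y - x ≤ r) : Metric.ediam s ≤ ENNReal.ofReal r := by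
  refine Metric.ediam_le fun x hx y hy => ?_
  rw [edist_dist, Real.dist_eq]
  refine ENNReal.ofReal_le_ofReal ?_
  rcases le_total x y with hxy | hxy
  · rw [abs_sub_comm, abs_of_nonneg (sub_nonneg.2 hxy)]; exact h x hx y hy hxy
  · rw [abs_of_nonneg (sub_nonneg.2 hxy)]; exact h y hy x hx hxy

theorem frontier_Ico_inter_setOf_lt_subset {g : ℝ → ℝ} (hg : Continuous g) (ε : ℝ) :
    frontier (Ico 0 1 ∩ {x | g x < ε}) ⊆ {0, 1} ∪ (Icc 0 1 ∩ {x | g x = ε}) := by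
  refine (frontier_inter_subset _ _).trans (union_subset_union ?_ ?_)
  · exact inter_subset_left.trans (frontier_Ico zero_lt_one).subset
  · rw [closure_Ico zero_ne_one]
    exact inter_subset_inter_right _ (frontier_lt_subset_eq hg continuous_const)

theorem iUnion_image_fract_connectedComponentIn {A : Set ℝ} (hA : A ⊆ Ico 0 1)
    (hfin : (connectedComponentIn A '' A).Finite) : ⋃ J ∈ hfin.toFinset, Int.fract '' J = A := by
  have hfract : ∀ J ⊆ A, Int.fract '' J = J := fun J hJ =>
    (image_congr fun x hx => Int.fract_eq_self.2 (hA (hJ hx))).trans (image_id J)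
  ext x
  simp only [mem_iUnion, Finite.mem_toFinset, exists_prop]
  constructor
  · rintro ⟨_, ⟨y, hy, rfl⟩, hx⟩
    rw [hfract _ (connectedComponentIn_subset A y)] at hx
    exact connectedComponentIn_subset A y hx
  · intro hx
    refine ⟨_, ⟨x, hx, rfl⟩, ?_⟩
    rw [hfract _ (connectedComponentIn_subset A x)]
    exact mem_connectedComponentIn hx

end RealEstimates

section SublevelSets

variable {v : ℝ → ℝ}

theorem exists_deriv_ne_zero_of_ne (hv : Differentiable ℝ v) (hnc : ∃ x y, v x ≠ v y) :
    ∃ x, deriv v x ≠ 0 := by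
  by_contra! h
  obtain ⟨x, y, hxy⟩ := hnc
  exact hxy (is_const_of_deriv_eq_zero hv h x y)

theorem finite_and_ncard_levelSet_le (hv : AnalyticOnNhd ℝ v univ) (hnc : ∃ x y, v x ≠ v y)
    (b : ℝ) : (Icc 0 1 ∩ v ⁻¹' {b}).Finite ∧
      (Icc 0 1 ∩ v ⁻¹' {b}).ncard ≤ (Icc 0 1 ∩ deriv v ⁻¹' {0}).ncard + 1 := by
  have hb : ∃ x, v x ≠ b := by
    obtain ⟨x, y, hxy⟩ := hnc
    by_cases hx : v x = b
    exacts [⟨y, hx ▸ hxy.symm⟩, ⟨x, hx⟩]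
  have hfin : (Icc 0 1 ∩ v ⁻¹' {b}).Finite :=
    hv.finite_inter_preimage_singleton isCompact_Icc hb
  have hZ : (Icc 0 1 ∩ deriv v ⁻¹' {0}).Finite :=
    hv.deriv.finite_inter_preimage_singleton isCompact_Icc
      (exists_deriv_ne_zero_of_ne (differentiableOn_univ.1 hv.differentiableOn) hnc)
  exact ⟨hfin, ncard_inter_preimage_le_ncard_add_one (continuousOn_univ.1 hv.continuousOn)
    ordConnected_Icc hfin hZ⟩

theorem finite_and_ncard_boundary_le (hv : AnalyticOnNhd ℝ v univ) (hnc : ∃ x y, v x ≠ v y)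
    (a ε : ℝ) : ({0, 1} ∪ (Icc 0 1 ∩ {x | |v x - a| = ε})).Finite ∧
      ({0, 1} ∪ (Icc 0 1 ∩ {x | |v x - a| = ε})).ncard ≤
        2 * (Icc 0 1 ∩ deriv v ⁻¹' {0}).ncard + 4 := by
  obtain ⟨hfin₁, hcard₁⟩ := finite_and_ncard_levelSet_le hv hnc (a + ε)
  obtain ⟨hfin₂, hcard₂⟩ := finite_and_ncard_levelSet_le hv hnc (a - ε)
  have hsub : Icc 0 1 ∩ {x | |v x - a| = ε} ⊆
      (Icc 0 1 ∩ v ⁻¹' {a + ε}) ∪ (Icc 0 1 ∩ v ⁻¹' {a - ε}) := by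
    rintro x ⟨hx, hxε⟩
    rcases eq_or_eq_neg_of_abs_eq hxε with h | h
    · exact Or.inl ⟨hx, by simp only [mem_preimage, mem_singleton_iff]; linarith⟩
    · exact Or.inr ⟨hx, by simp only [mem_preimage, mem_singleton_iff]; linarith⟩
  refine ⟨(toFinite _).union ((hfin₁.union hfin₂).subset hsub), ?_⟩
  calc _ ≤ ({0, 1} : Set ℝ).ncard + (Icc 0 1 ∩ {x | |v x - a| = ε}).ncard := ncard_union_le _ _
    _ ≤ 2 + ((Icc 0 1 ∩ v ⁻¹' {a + ε}).ncard + (Icc 0 1 ∩ v ⁻¹' {a - ε}).ncard) :=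
      add_le_add (ncard_pair zero_ne_one).le
        ((ncard_le_ncard hsub (hfin₁.union hfin₂)).trans (ncard_union_le _ _))
    _ ≤ _ := by omega

theorem exists_pow_length_le (hv : AnalyticOnNhd ℝ v univ) (hnc : ∃ x y, v x ≠ v y) :
    ∃ M : ℕ, ∃ C > 0, ∀ a ε x y : ℝ, x ≤ y → Icc x y ⊆ Icc 0 1 →
      (∀ t ∈ Icc x y, |v t - a| < ε) → (y - x) ^ (M + 1) ≤ C * ε := by
  have hdiff : Differentiable ℝ v := differentiableOn_univ.1 hv.differentiableOn
  have hne := exists_deriv_ne_zero_of_ne hdiff hnc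
  set Z := Icc 0 1 ∩ deriv v ⁻¹' {0}
  have hZ : Z.Finite := hv.deriv.finite_inter_preimage_singleton isCompact_Icc hne
  obtain ⟨M, c, hc, hbound⟩ := hv.deriv.exists_lowerBoundAwayFromZeros isCompact_Icc hne
  refine ⟨M, 2 * (3 * (Z.ncard + 1)) ^ (M + 1) / c, by positivity,
    fun a ε x y hxy hsub hU => ?_⟩
  rcases hxy.eq_or_lt with rfl | hxy
  · have hε : 0 < ε := (abs_nonneg _).trans_lt (hU x (left_mem_Icc.2 le_rfl))
    rw [sub_self, zero_pow M.succ_ne_zero]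
    positivity
  have hyx : y - x ≤ 1 := by linarith [(hsub (left_mem_Icc.2 hxy.le)).1,
    (hsub (right_mem_Icc.2 hxy.le)).2]
  have key := mul_pow_lt_of_forall_abs_sub_lt hdiff hZ hxy hyx
    (fun t ht hzero => ⟨hsub ht, hzero⟩) (fun t ht => hbound t (hsub ht)) hU
  rw [div_pow, mul_div_assoc', div_lt_iff₀ (by positivity)] at key
  rw [div_mul_eq_mul_div, le_div_iff₀ hc]
  linarith

end SublevelSets

theorem stmt_10_general (v : ℝ → ℝ)
    (han : ∀ x : ℝ, AnalyticAt ℝ v x) (hnc : ∃ x y : ℝ, v x ≠ v y) :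
    ∃ ε₀ : ℝ, 0 < ε₀ ∧ ∃ β : ℝ, 0 < β ∧ ∃ s : ℕ, 1 ≤ s ∧
      ∀ ε : ℝ, 0 < ε → ε ≤ ε₀ → ∀ a : ℝ,
        ∃ F : Finset (Set ℝ), F.card ≤ s ∧
          (∀ J ∈ F, J.OrdConnected ∧ EMetric.diam J ≤ ENNReal.ofReal (ε ^ β)) ∧
          {x : ℝ | x ∈ Set.Ico (0 : ℝ) 1 ∧ |v x - a| < ε} =
            ⋃ J ∈ F, Int.fract '' J := by
  have hv : AnalyticOnNhd ℝ v univ := fun x _ => han x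
  obtain ⟨M, C, hC, hlength⟩ := exists_pow_length_le hv hnc
  refine ⟨(C ^ (M + 2))⁻¹, by positivity, ((M + 2 : ℕ) : ℝ)⁻¹, by positivity,
    2 * (Icc 0 1 ∩ deriv v ⁻¹' {0}).ncard + 4, by omega, fun ε hε hε₀ a => ?_⟩
  set A := {x : ℝ | x ∈ Ico (0 : ℝ) 1 ∧ |v x - a| < ε}
  have hA : A ⊆ Ico 0 1 := fun x hx => hx.1
  have hAb : BddBelow A := ⟨0, fun x hx => hx.1.1⟩
  obtain ⟨hSfin, hScard⟩ := finite_and_ncard_boundary_le hv hnc a ε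
  obtain ⟨hfin, hcard⟩ := finite_and_ncard_image_connectedComponentIn_le hAb hSfin fun x hx =>
    frontier_Ico_inter_setOf_lt_subset (g := fun x => |v x - a|)
      (continuous_abs.comp ((continuousOn_univ.1 hv.continuousOn).sub continuous_const)) ε
      (csInf_connectedComponentIn_mem_frontier hAb hx)
  refine ⟨hfin.toFinset, by rw [← ncard_eq_toFinset_card _ hfin]; omega, fun J hJ => ?_,
    (iUnion_image_fract_connectedComponentIn hA hfin).symm⟩
  obtain ⟨x, -, rfl⟩ := (Finite.mem_toFinset hfin).1 hJ
  have hord := (isPreconnected_connectedComponentIn (F := A) (x := x)).ordConnected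
  refine ⟨hord, ediam_le_ofReal_of_forall_sub_le fun y hy z hz hyz => ?_⟩
  have hIcc : Icc y z ⊆ A := (hord.out hy hz).trans (connectedComponentIn_subset A x)
  have hsmall : C ^ (M + 2) * ε ≤ 1 :=
    calc C ^ (M + 2) * ε ≤ C ^ (M + 2) * (C ^ (M + 2))⁻¹ := by gcongr
      _ = 1 := mul_inv_cancel₀ (by positivity)
  exact le_rpow_inv_of_pow_le (sub_nonneg.2 hyz) hε.le hC.le (hlength a ε y z hyz
    (hIcc.trans (hA.trans Ico_subset_Icc_self)) fun t ht => (hIcc ht).2) hsmall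

/-- Every non-constant real-analytic function `v : 𝕋 → ℝ`
(modelled as a `1`-periodic analytic function on `ℝ`) belongs to the class
`𝒱¹(𝕋,ℝ)`: there exist `ε₀ > 0`, `β > 0` and an integer `s ≥ 1` such that for all
`0 < ε ≤ ε₀` and all `a ∈ ℝ`, the set `{x ∈ 𝕋 : |v(x) - a| < ε}` consists of at
most `s` intervals, each of length at most `ε^β`.  An interval of the circle
(identified with `[0,1)` via `Int.fract`) is the image under `Int.fract` of an
order-connected subset of `ℝ` of the same diameter. -/
theorem stmt_10 (v : ℝ → ℝ) (hper : Function.Periodic v 1)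
    (han : ∀ x : ℝ, AnalyticAt ℝ v x) (hnc : ∃ x y : ℝ, v x ≠ v y) :
    ∃ ε₀ : ℝ, 0 < ε₀ ∧ ∃ β : ℝ, 0 < β ∧ ∃ s : ℕ, 1 ≤ s ∧
      ∀ ε : ℝ, 0 < ε → ε ≤ ε₀ → ∀ a : ℝ,
        ∃ F : Finset (Set ℝ), F.card ≤ s ∧
          (∀ J ∈ F, J.OrdConnected ∧ EMetric.diam J ≤ ENNReal.ofReal (ε ^ β)) ∧
          {x : ℝ | x ∈ Set.Ico (0 : ℝ) 1 ∧ |v x - a| < ε} =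
            ⋃ J ∈ F, Int.fract '' J :=
  stmt_10_general v han hnc
end

section
/- Let |E| < λ/2, |v| ≤ 1/3, λ large, and let φ : [0,1] → S¹ be C¹ with |φ'(x)| < 2‖v'‖/λ² for all x. If |φ(x₀)| < 1/λ for some x₀ ∈ [0,1], then |λ v(x) - E - 1/tan(φ(x))| > √λ for all x ∈ [0,1]. -/
open Set

set_option maxHeartbeats 1000000 in
/-- Let `|E| < λ/2`, `|v| ≤ 1/3`, `‖v'‖ ≤ V`, `λ` large, and let
`φ : [0,1] → S¹` be `C¹` with `|φ'(x)| < 2V/λ²`.  If `|φ(x₀)| < 1/λ` for some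
`x₀ ∈ [0,1]`, then `|λ v(x) - E - 1/tan(φ(x))| > √λ` for all `x ∈ [0,1]`; in
projective form (valid also where `sin(φ(x)) = 0`, i.e. `1/tan(φ(x)) = ∞`):
`|(λ v(x) - E) sin(φ(x)) - cos(φ(x))| > √λ |sin(φ(x))|`. -/
theorem stmt_13 (V : ℝ) (hV0 : 0 ≤ V) :
    ∃ lam0 : ℝ, 0 < lam0 ∧
    ∀ lam E : ℝ, lam0 ≤ lam → |E| < lam / 2 →
    ∀ v v' : ℝ → ℝ, (∀ x, |v x| ≤ 1 / 3) →
      (∀ x, HasDerivAt v (v' x) x) → (∀ x, |v' x| ≤ V) →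
    ∀ φ φ' : ℝ → ℝ,
      (∀ x ∈ Icc (0 : ℝ) 1, HasDerivWithinAt φ (φ' x) (Icc (0 : ℝ) 1) x) →
      (∀ x ∈ Icc (0 : ℝ) 1, |φ' x| < 2 * V / lam ^ 2) →
    (∃ x₀ ∈ Icc (0 : ℝ) 1, |φ x₀| < 1 / lam) →
    ∀ x ∈ Icc (0 : ℝ) 1,
      Real.sqrt lam * |Real.sin (φ x)| <
        |(lam * v x - E) * Real.sin (φ x) - Real.cos (φ x)| := by
  refine ⟨400 * (1 + V) ^ 2, by positivity, ?_⟩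
  intro lam E hlam hE v v' hv hvd hv' φ φ' hφd hφ' ⟨x₀, hx₀, hφx₀⟩ x hx
  have h1V : (1 : ℝ) ≤ (1 + V) := by linarith
  have hlam400 : (400 : ℝ) ≤ lam := by nlinarith
  have hlam0 : (0 : ℝ) < lam := by linarith
  have hs : Real.sqrt lam * Real.sqrt lam = lam := Real.mul_self_sqrt hlam0.le
  have hs20 : 20 * (1 + V) ≤ Real.sqrt lam := by
    rw [show (400 : ℝ) * (1 + V) ^ 2 = (20 * (1 + V)) ^ 2 by ring] at hlam
    calc 20 * (1 + V) = Real.sqrt ((20 * (1 + V)) ^ 2) := by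
          rw [Real.sqrt_sq (by positivity)]
      _ ≤ Real.sqrt lam := Real.sqrt_le_sqrt hlam
  have hs0 : 0 < Real.sqrt lam := by nlinarith
  -- MVT: |φ x - φ x₀| ≤ 2V/λ²
  have hmvt : |φ x - φ x₀| ≤ 2 * V / lam ^ 2 * |x - x₀| := by
    have := (convex_Icc (0:ℝ) 1).norm_image_sub_le_of_norm_hasDerivWithin_le hφd
      (fun y hy => (hφ' y hy).le) hx₀ hx
    simpa [Real.norm_eq_abs] using this
  have hxx₀ : |x - x₀| ≤ 1 := by
    rw [abs_le]; constructor <;> [linarith [hx.1, hx₀.2]; linarith [hx.2, hx₀.1]]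
  have hφbound : |φ x| ≤ 1 / lam + 2 * V / lam ^ 2 := by
    have h2 : 2 * V / lam ^ 2 * |x - x₀| ≤ 2 * V / lam ^ 2 := by
      have : (0:ℝ) ≤ 2 * V / lam ^ 2 := by positivity
      nlinarith
    calc |φ x| ≤ |φ x - φ x₀| + |φ x₀| := by
          simpa using abs_add_le (φ x - φ x₀) (φ x₀)
      _ ≤ 1 / lam + 2 * V / lam ^ 2 := by linarith
  -- B := bound, B ≤ 201/(200 λ)
  have h2V : 2 * V / lam ^ 2 ≤ 1 / (200 * lam) := by
    rw [div_le_div_iff₀ (by positivity) (by positivity)]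
    nlinarith
  have hB : |φ x| ≤ 201 / (200 * lam) := by
    have : 1 / lam + 1 / (200 * lam) = 201 / (200 * lam) := by
      field_simp; ring
    linarith
  have hsin : |Real.sin (φ x)| ≤ 201 / (200 * lam) :=
    (Real.abs_sin_le_abs).trans hB
  have hcos : 1 - (201 / (200 * lam)) ^ 2 / 2 ≤ Real.cos (φ x) := by
    have h1 := Real.one_sub_sq_div_two_le_cos (x := φ x)
    have h2 : (φ x) ^ 2 ≤ (201 / (200 * lam)) ^ 2 := by
      have := abs_nonneg (φ x)
      nlinarith [sq_abs (φ x)]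
    linarith
  -- |λ v x - E| ≤ 5λ/6
  have hvE : |lam * v x - E| ≤ 5 / 6 * lam := by
    have h1 : |lam * v x| ≤ lam / 3 := by
      rw [abs_mul, abs_of_pos hlam0]
      nlinarith [hv x]
    calc |lam * v x - E| ≤ |lam * v x| + |E| := abs_sub (lam * v x) E
      _ ≤ 5 / 6 * lam := by linarith
  -- lower bound for the RHS
  have hlow : Real.cos (φ x) - |lam * v x - E| * |Real.sin (φ x)| ≤
      |(lam * v x - E) * Real.sin (φ x) - Real.cos (φ x)| := by
    have h1 : |Real.cos (φ x)| - |(lam * v x - E) * Real.sin (φ x)| ≤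
        |(lam * v x - E) * Real.sin (φ x) - Real.cos (φ x)| := by
      rw [abs_sub_comm]
      exact (abs_sub_abs_le_abs_sub _ _)
    rw [abs_mul] at h1
    have := le_abs_self (Real.cos (φ x))
    linarith
  -- final arithmetic
  have hsinn : 0 ≤ |Real.sin (φ x)| := abs_nonneg _
  have key : Real.sqrt lam * |Real.sin (φ x)| + |lam * v x - E| * |Real.sin (φ x)|
      < Real.cos (φ x) := by
    have h1 : Real.sqrt lam * |Real.sin (φ x)| ≤ Real.sqrt lam * (201 / (200 * lam)) :=
      mul_le_mul_of_nonneg_left hsin hs0.le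
    have h2 : Real.sqrt lam * (201 / (200 * lam)) = 201 / (200 * Real.sqrt lam) := by
      rw [eq_div_iff (by positivity)]
      field_simp
      nlinarith
    have h3 : 201 / (200 * Real.sqrt lam) ≤ 201 / (200 * 20) := by
      rw [div_le_div_iff₀ (by positivity) (by norm_num)]
      nlinarith
    have h4 : |lam * v x - E| * |Real.sin (φ x)| ≤ 5 / 6 * lam * (201 / (200 * lam)) := by
      apply mul_le_mul hvE hsin hsinn (by positivity)
    have h5 : 5 / 6 * lam * (201 / (200 * lam)) = 201 / 240 := by
      field_simp; ring
    have h6 : (201 / (200 * lam)) ^ 2 / 2 ≤ 1 / 100 := by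
      rw [div_le_div_iff₀ (by norm_num) (by norm_num)]
      have : (201 / (200 * lam)) ≤ 201 / (200 * 400) := by
        rw [div_le_div_iff₀ (by positivity) (by norm_num)]
        nlinarith
      nlinarith [sq_nonneg (201 / (200 * lam))]
    have : Real.sqrt lam * |Real.sin (φ x)| ≤ 201 / 4000 := by
      calc Real.sqrt lam * |Real.sin (φ x)| ≤ 201 / (200 * Real.sqrt lam) := by
            rw [← h2]; exact h1
        _ ≤ 201 / (200 * 20) := h3
        _ = 201 / 4000 := by norm_num
    linarith
  nlinarith [abs_nonneg (lam * v x - E)]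
end

section
/- (Derivative propagation, Lemma 3.1(2)) Assume |v| ≤ 1/3, ‖v'‖ < ∞, |E| < λ/2, b ≥ λ³, λ large. If φ : [0,1] → S¹ is C¹ with |φ'(x)| < (λ‖v'‖/b)·Σ_{i=0}^{m} (2λ²/b)^i for all x, and for j ∈ {1,…,b} one defines φʲ(x) = arctan(λ v((x+j-1)/b) - E - 1/tan(φ((x+j-1)/b))), then |(φʲ)'(x)| < (λ‖v'‖/b)·Σ_{i=0}^{m+1} (2λ²/b)^i for all x ∈ [0,1] and all j. -/
open Set

set_option maxHeartbeats 1600000 in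
/-- (Derivative propagation, Lemma 3.1(2)) Assume `|v| ≤ 1/3`,
`‖v'‖ ≤ V`, `|E| < λ/2`, `b ≥ λ³`, `λ` large.  If `φ : [0,1] → S¹` is `C¹` with
`|φ'(x)| < (λV/b) Σ_{i=0}^m (2λ²/b)^i`, and `φʲ` is (a lift of) the image circle
map `φʲ(x) = arctan(λ v((x+j-1)/b) - E - 1/tan(φ((x+j-1)/b)))` — expressed
projectively by the identity
`cos(φʲ(x))·(a(x) sin(y(x)) - cos(y(x))) = sin(φʲ(x))·sin(y(x))` with
`a(x) = λ v((x+j-1)/b) - E`, `y(x) = φ((x+j-1)/b)` — then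
`|(φʲ)'(x)| < (λV/b) Σ_{i=0}^{m+1} (2λ²/b)^i` on `[0,1]`. -/
theorem stmt_14 : ∃ lam0 : ℝ, 0 < lam0 ∧
    ∀ lam E V : ℝ, lam0 ≤ lam → |E| < lam / 2 → 0 ≤ V →
    ∀ b : ℕ, lam ^ 3 ≤ (b : ℝ) →
    ∀ v v' : ℝ → ℝ, (∀ t, |v t| ≤ 1 / 3) →
      (∀ t, HasDerivAt v (v' t) t) → (∀ t, |v' t| ≤ V) →
    ∀ m : ℕ, ∀ φ φ' : ℝ → ℝ,
      (∀ t ∈ Icc (0 : ℝ) 1, HasDerivWithinAt φ (φ' t) (Icc (0 : ℝ) 1) t) →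
      (∀ t ∈ Icc (0 : ℝ) 1, |φ' t| <
        (lam * V / b) * ∑ i ∈ Finset.range (m + 1), (2 * lam ^ 2 / b) ^ i) →
    ∀ j : ℕ, 1 ≤ j → j ≤ b →
    ∀ Φ Φ' : ℝ → ℝ,
      (∀ x ∈ Icc (0 : ℝ) 1,
        Real.cos (Φ x) *
            ((lam * v ((x + j - 1) / b) - E) * Real.sin (φ ((x + j - 1) / b)) -
              Real.cos (φ ((x + j - 1) / b))) =
          Real.sin (Φ x) * Real.sin (φ ((x + j - 1) / b))) →
      (∀ x ∈ Icc (0 : ℝ) 1, HasDerivWithinAt Φ (Φ' x) (Icc (0 : ℝ) 1) x) →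
    ∀ x ∈ Icc (0 : ℝ) 1,
      |Φ' x| < (lam * V / b) * ∑ i ∈ Finset.range (m + 2), (2 * lam ^ 2 / b) ^ i := by
  refine ⟨2, by norm_num, ?_⟩
  intro lam E V hlam hE hV b hb v v' hvb hvd hv'V m φ φ' hφ hφ' j hj1 hjb Φ Φ' hId hΦ x hx
  have hlam0 : (0:ℝ) < lam := by linarith
  have hbpos : (0:ℝ) < (b:ℝ) := lt_of_lt_of_le (by positivity) hb
  have hj1' : (1:ℝ) ≤ (j:ℝ) := by exact_mod_cast hj1
  have hjb' : (j:ℝ) ≤ (b:ℝ) := by exact_mod_cast hjb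
  have hXmem : (x + (j:ℝ) - 1) / (b:ℝ) ∈ Icc (0:ℝ) 1 := by
    constructor
    · apply div_nonneg _ hbpos.le; linarith [hx.1]
    · rw [div_le_one hbpos]; linarith [hx.2]
  -- derivative of the inner affine map
  have hu : HasDerivWithinAt (fun y : ℝ => (y + (j:ℝ) - 1) / (b:ℝ)) (1 / (b:ℝ))
      (Icc (0:ℝ) 1) x := by
    have := (((hasDerivWithinAt_id x (Icc (0:ℝ) 1)).add_const ((j:ℝ))).sub_const
      (1:ℝ)).div_const (b:ℝ)
    simpa using this
  have hmaps : MapsTo (fun y : ℝ => (y + (j:ℝ) - 1) / (b:ℝ)) (Icc (0:ℝ) 1) (Icc (0:ℝ) 1) := by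
    intro y hy
    constructor
    · apply div_nonneg _ hbpos.le; linarith [hy.1]
    · rw [div_le_one hbpos]; linarith [hy.2]
  have hyu : HasDerivWithinAt (fun y : ℝ => φ ((y + (j:ℝ) - 1) / (b:ℝ)))
      (φ' ((x + (j:ℝ) - 1) / (b:ℝ)) * (1 / (b:ℝ))) (Icc (0:ℝ) 1) x :=
    (hφ _ hXmem).comp x hu hmaps
  have hvu : HasDerivWithinAt (fun y : ℝ => v ((y + (j:ℝ) - 1) / (b:ℝ)))
      (v' ((x + (j:ℝ) - 1) / (b:ℝ)) * (1 / (b:ℝ))) (Icc (0:ℝ) 1) x :=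
    (hvd _).comp_hasDerivWithinAt x hu
  have hA : HasDerivWithinAt (fun y : ℝ => lam * v ((y + (j:ℝ) - 1) / (b:ℝ)) - E)
      (lam * (v' ((x + (j:ℝ) - 1) / (b:ℝ)) * (1 / (b:ℝ)))) (Icc (0:ℝ) 1) x :=
    (hvu.const_mul lam).sub_const E
  have hS : HasDerivWithinAt (fun y : ℝ => Real.sin (φ ((y + (j:ℝ) - 1) / (b:ℝ))))
      (Real.cos (φ ((x + (j:ℝ) - 1) / (b:ℝ))) * (φ' ((x + (j:ℝ) - 1) / (b:ℝ)) * (1 / (b:ℝ))))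
      (Icc (0:ℝ) 1) x :=
    (Real.hasDerivAt_sin _).comp_hasDerivWithinAt x hyu
  have hC : HasDerivWithinAt (fun y : ℝ => Real.cos (φ ((y + (j:ℝ) - 1) / (b:ℝ))))
      (-Real.sin (φ ((x + (j:ℝ) - 1) / (b:ℝ))) * (φ' ((x + (j:ℝ) - 1) / (b:ℝ)) * (1 / (b:ℝ))))
      (Icc (0:ℝ) 1) x :=
    (Real.hasDerivAt_cos _).comp_hasDerivWithinAt x hyu
  have hP : HasDerivWithinAt (fun y : ℝ => Real.cos (Φ y)) (-Real.sin (Φ x) * Φ' x)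
      (Icc (0:ℝ) 1) x :=
    (Real.hasDerivAt_cos _).comp_hasDerivWithinAt x (hΦ x hx)
  have hQ : HasDerivWithinAt (fun y : ℝ => Real.sin (Φ y)) (Real.cos (Φ x) * Φ' x)
      (Icc (0:ℝ) 1) x :=
    (Real.hasDerivAt_sin _).comp_hasDerivWithinAt x (hΦ x hx)
  -- the two derivatives of the same function
  have hL' : HasDerivWithinAt (fun y : ℝ => Real.cos (Φ y) *
      ((lam * v ((y + (j:ℝ) - 1) / (b:ℝ)) - E) * Real.sin (φ ((y + (j:ℝ) - 1) / (b:ℝ))) -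
        Real.cos (φ ((y + (j:ℝ) - 1) / (b:ℝ)))))
      (-Real.sin (Φ x) * Φ' x *
        ((lam * v ((x + (j:ℝ) - 1) / (b:ℝ)) - E) * Real.sin (φ ((x + (j:ℝ) - 1) / (b:ℝ))) -
          Real.cos (φ ((x + (j:ℝ) - 1) / (b:ℝ)))) +
        Real.cos (Φ x) *
          (lam * (v' ((x + (j:ℝ) - 1) / (b:ℝ)) * (1 / (b:ℝ))) *
              Real.sin (φ ((x + (j:ℝ) - 1) / (b:ℝ))) +
            (lam * v ((x + (j:ℝ) - 1) / (b:ℝ)) - E) *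
              (Real.cos (φ ((x + (j:ℝ) - 1) / (b:ℝ))) *
                (φ' ((x + (j:ℝ) - 1) / (b:ℝ)) * (1 / (b:ℝ)))) -
            -Real.sin (φ ((x + (j:ℝ) - 1) / (b:ℝ))) *
              (φ' ((x + (j:ℝ) - 1) / (b:ℝ)) * (1 / (b:ℝ)))))
      (Icc (0:ℝ) 1) x := hP.mul ((hA.mul hS).sub hC)
  have hR0 := hQ.mul hS
  have hR' : HasDerivWithinAt (fun y : ℝ => Real.cos (Φ y) *
      ((lam * v ((y + (j:ℝ) - 1) / (b:ℝ)) - E) * Real.sin (φ ((y + (j:ℝ) - 1) / (b:ℝ))) -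
        Real.cos (φ ((y + (j:ℝ) - 1) / (b:ℝ)))))
      (Real.cos (Φ x) * Φ' x * Real.sin (φ ((x + (j:ℝ) - 1) / (b:ℝ))) +
        Real.sin (Φ x) *
          (Real.cos (φ ((x + (j:ℝ) - 1) / (b:ℝ))) *
            (φ' ((x + (j:ℝ) - 1) / (b:ℝ)) * (1 / (b:ℝ)))))
      (Icc (0:ℝ) 1) x :=
    hR0.congr (fun y hy => hId y hy) (hId x hx)
  have heq := ((uniqueDiffOn_Icc (one_pos)) x hx).eq_deriv _ hL' hR'
  clear hL' hR' hR0 hP hQ hA hS hC hvu hyu hu hmaps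
  set ss := Real.sin (φ ((x + (j:ℝ) - 1) / (b:ℝ))) with hss
  set cc := Real.cos (φ ((x + (j:ℝ) - 1) / (b:ℝ))) with hcc
  set PP := Real.cos (Φ x) with hPP
  set QQ := Real.sin (Φ x) with hQQ
  set aa := lam * v ((x + (j:ℝ) - 1) / (b:ℝ)) - E with haa
  set ap := lam * (v' ((x + (j:ℝ) - 1) / (b:ℝ)) * (1 / (b:ℝ))) with hap
  set yp := φ' ((x + (j:ℝ) - 1) / (b:ℝ)) * (1 / (b:ℝ)) with hyp
  have hIdx : PP * (aa * ss - cc) = QQ * ss := hId x hx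
  have hPQ : PP ^ 2 + QQ ^ 2 = 1 := by
    rw [hPP, hQQ, add_comm]; exact Real.sin_sq_add_cos_sq (Φ x)
  have hsc : ss ^ 2 + cc ^ 2 = 1 := by
    rw [hss, hcc]; exact Real.sin_sq_add_cos_sq (φ ((x + (j:ℝ) - 1) / (b:ℝ)))
  -- solve the differentiated identity for Φ' x
  have hKN : Φ' x * (QQ * (aa * ss - cc) + PP * ss) =
      PP * (ap * ss + (aa * cc + ss) * yp) - QQ * cc * yp := by
    linear_combination -heq
  have hKK : (QQ * (aa * ss - cc) + PP * ss) ^ 2 = ss ^ 2 + (aa * ss - cc) ^ 2 := by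
    linear_combination (QQ * ss - PP * (aa * ss - cc)) * hIdx +
      (ss ^ 2 + (aa * ss - cc) ^ 2) * hPQ
  have hNK : (PP * (ap * ss + (aa * cc + ss) * yp) - QQ * cc * yp) *
      (QQ * (aa * ss - cc) + PP * ss) = ap * ss ^ 2 + yp := by
    linear_combination (ap * ss * QQ + yp * (QQ * (aa * cc + ss) + PP * cc)) * hIdx +
      (ap * ss ^ 2 + yp * (ss ^ 2 + cc ^ 2)) * hPQ + yp * hsc
  have hmain : Φ' x * (ss ^ 2 + (aa * ss - cc) ^ 2) = ap * ss ^ 2 + yp := by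
    linear_combination (QQ * (aa * ss - cc) + PP * ss) * hKN - Φ' x * hKK + hNK
  -- key lower bound on ss^2 + (aa ss - cc)^2
  have haabs : |aa| ≤ lam := by
    rw [abs_le]
    obtain ⟨h1, h2⟩ := abs_le.mp (hvb ((x + (j:ℝ) - 1) / (b:ℝ)))
    obtain ⟨h3, h4⟩ := abs_lt.mp hE
    rw [haa]
    constructor <;> nlinarith
  have ha2 : aa ^ 2 ≤ lam ^ 2 := by
    have := pow_le_pow_left₀ (abs_nonneg aa) haabs 2
    rwa [sq_abs] at this
  have hCS : 1 ≤ (aa ^ 2 + 2) * (ss ^ 2 + (aa * ss - cc) ^ 2) := by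
    nlinarith [sq_nonneg (aa * (aa * ss - cc) + ss), sq_nonneg (aa * ss - cc), hsc]
  have hr2 : 1 ≤ 2 * lam ^ 2 * (ss ^ 2 + (aa * ss - cc) ^ 2) := by
    nlinarith [hCS, mul_nonneg (by nlinarith : (0:ℝ) ≤ 2 * lam ^ 2 - aa ^ 2 - 2)
      (by positivity : (0:ℝ) ≤ ss ^ 2 + (aa * ss - cc) ^ 2)]
  have hr2pos : 0 < ss ^ 2 + (aa * ss - cc) ^ 2 := by
    by_contra h
    push_neg at h
    nlinarith [mul_nonneg (by positivity : (0:ℝ) ≤ 2 * lam ^ 2) (neg_nonneg.mpr h)]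
  have habs : |Φ' x| * (ss ^ 2 + (aa * ss - cc) ^ 2) = |ap * ss ^ 2 + yp| := by
    rw [← abs_of_pos hr2pos, ← abs_mul, hmain]
  have e0 : |ap * ss ^ 2 + yp| ≤ |ap| * ss ^ 2 + |yp| := by
    have h := abs_add_le (ap * ss ^ 2) yp
    rwa [abs_mul, abs_of_nonneg (sq_nonneg ss)] at h
  have e0' : |Φ' x| * (ss ^ 2 + (aa * ss - cc) ^ 2) ≤ |ap| * ss ^ 2 + |yp| := by
    rw [habs]; exact e0
  have eA : |Φ' x| * (ss ^ 2 + (aa * ss - cc) ^ 2) ≤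
      (|ap| + 2 * lam ^ 2 * |yp|) * (ss ^ 2 + (aa * ss - cc) ^ 2) := by
    nlinarith [e0', mul_le_mul_of_nonneg_left (show ss ^ 2 ≤ ss ^ 2 + (aa * ss - cc) ^ 2 by
        nlinarith [sq_nonneg (aa * ss - cc)]) (abs_nonneg ap),
      mul_le_mul_of_nonneg_left hr2 (abs_nonneg yp)]
  have eB : |Φ' x| ≤ |ap| + 2 * lam ^ 2 * |yp| := le_of_mul_le_mul_right eA hr2pos
  have eap : |ap| ≤ lam * V / b := by
    have h := hv'V ((x + (j:ℝ) - 1) / (b:ℝ))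
    have h2 : |ap| = lam * |v' ((x + (j:ℝ) - 1) / (b:ℝ))| / b := by
      rw [hap, abs_mul, abs_mul, abs_of_pos hlam0,
        abs_of_pos (by positivity : (0:ℝ) < 1 / (b:ℝ))]
      ring
    rw [h2]
    gcongr
  have eyp : |yp| <
      (lam * V / b * ∑ i ∈ Finset.range (m + 1), (2 * lam ^ 2 / b) ^ i) / b := by
    have h := hφ' _ hXmem
    rw [hyp, abs_mul, abs_of_pos (by positivity : (0:ℝ) < 1 / (b:ℝ))]
    have h2 := mul_lt_mul_of_pos_right h (show (0:ℝ) < 1 / (b:ℝ) by positivity)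
    have h3 : (lam * V / b * ∑ i ∈ Finset.range (m + 1), (2 * lam ^ 2 / b) ^ i) * (1 / b) =
        (lam * V / b * ∑ i ∈ Finset.range (m + 1), (2 * lam ^ 2 / b) ^ i) / b := by ring
    linarith
  have hsum : ∑ i ∈ Finset.range (m + 2), (2 * lam ^ 2 / b) ^ i =
      (2 * lam ^ 2 / b) * ∑ i ∈ Finset.range (m + 1), (2 * lam ^ 2 / b) ^ i + 1 :=
    geom_sum_succ
  calc |Φ' x| ≤ |ap| + 2 * lam ^ 2 * |yp| := eB
    _ < lam * V / b + 2 * lam ^ 2 *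
        ((lam * V / b * ∑ i ∈ Finset.range (m + 1), (2 * lam ^ 2 / b) ^ i) / b) := by
        have h2 := mul_lt_mul_of_pos_left eyp (show (0:ℝ) < 2 * lam ^ 2 by positivity)
        linarith [eap]
    _ = (lam * V / b) *
        ((2 * lam ^ 2 / b) * ∑ i ∈ Finset.range (m + 1), (2 * lam ^ 2 / b) ^ i + 1) := by
        ring
    _ = (lam * V / b) * ∑ i ∈ Finset.range (m + 2), (2 * lam ^ 2 / b) ^ i := by
        rw [hsum]
end

section
/- (Lemma 3.1(1)) Assume v ∈ 𝒱¹(𝕋,ℝ) with constants ε₀, β, s, |v| ≤ 1/3, |E| < λ/2, b ≥ λ³, λ large. Let φ : [0,1] → S¹ be C¹ with |φ'(x)| < (λ‖v'‖/b)Σ_{i=0}^m (2λ²/b)^i, and define φʲ(x) = arctan(λ v((x+j-1)/b) - E - 1/tan(φ((x+j-1)/b))) for j = 1,…,b. Then there are at most (s+1)(2 + ⌊2^β λ^{-β/2} b⌋) indices j ∈ {1,…,b} for which min_{x∈[0,1]} |tan φʲ(x)| < √λ. -/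
open Set
open scoped Classical

lemma sin_lip_aux (a b : ℝ) : |Real.sin a - Real.sin b| ≤ |a - b| := by
  rw [Real.sin_sub_sin]
  calc |2 * Real.sin ((a-b)/2) * Real.cos ((a+b)/2)| ≤ 2 * |(a-b)/2| * 1 := by
        rw [abs_mul, abs_mul, abs_two]
        have h1 : |Real.sin ((a-b)/2)| ≤ |(a-b)/2| := Real.abs_sin_le_abs
        have h2 : |Real.cos ((a+b)/2)| ≤ 1 := Real.abs_cos_le_one _
        have h3 : (0:ℝ) ≤ |Real.sin ((a-b)/2)| := abs_nonneg _
        nlinarith [abs_nonneg ((a-b)/2)]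
    _ = |a - b| := by rw [abs_div]; simp; ring

/-- A finset of integers with pairwise differences at most `L` has at most
`⌊L⌋₊ + 1` elements. -/
lemma int_card_le_aux (S : Finset ℤ) (L : ℝ) (hL : 0 ≤ L)
    (h : ∀ a ∈ S, ∀ b ∈ S, (a : ℝ) - b ≤ L) : S.card ≤ ⌊L⌋₊ + 1 := by
  rcases S.eq_empty_or_nonempty with rfl | hS
  · simp
  · have hmin := S.min'_mem hS
    have hsub : S ⊆ Finset.Icc (S.min' hS) (S.min' hS + ⌊L⌋₊) := by
      intro a ha
      refine Finset.mem_Icc.mpr ⟨S.min'_le a ha, ?_⟩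
      have h1 : (a : ℝ) - S.min' hS ≤ L := h a ha _ hmin
      have h2 : ((a - S.min' hS : ℤ) : ℝ) ≤ L := by push_cast; linarith
      have h3 : (a - S.min' hS : ℤ) ≤ ⌊L⌋ := Int.le_floor.mpr h2
      have h4 : ((⌊L⌋₊ : ℤ)) = ⌊L⌋ := Int.natCast_floor_eq_floor hL
      omega
    calc S.card ≤ (Finset.Icc (S.min' hS) (S.min' hS + ⌊L⌋₊)).card :=
          Finset.card_le_card hsub
      _ = ⌊L⌋₊ + 1 := by rw [Int.card_Icc]; omega

set_option maxHeartbeats 8000000 in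
/-- (Lemma 3.1(1)) Assume `v ∈ 𝒱¹(𝕋,ℝ)` with constants
`ε₀, β, s` (for `0 < ε ≤ ε₀` the set `{x : |v(x) - a| < ε}` is a union of at most
`s` circle intervals of length ≤ `ε^β`), `|v| ≤ 1/3`, `‖v'‖ ≤ V`, `|E| < λ/2`,
`b ≥ λ³`, `λ` large.  Let `φ : [0,1] → S¹` be `C¹` with
`|φ'| < (λV/b) Σ_{i=0}^m (2λ²/b)^i` and let
`φʲ(x) = arctan(λ v((x+j-1)/b) - E - 1/tan(φ((x+j-1)/b)))`.  Then there are at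
most `(s+1)(2 + ⌊2^β λ^{-β/2} b⌋)` indices `j ∈ {1,…,b}` for which
`min_{x∈[0,1]} |tan φʲ(x)| < √λ`; projectively, `|tan φʲ(x)| < √λ` reads
`|(λ v((x+j-1)/b) - E) sin(φ((x+j-1)/b)) - cos(φ((x+j-1)/b))| <
  √λ |sin(φ((x+j-1)/b))|`. -/
theorem stmt_16 (ε₀ β : ℝ) (hε₀ : 0 < ε₀) (hβ : 0 < β) (s : ℕ) (hs : 1 ≤ s)
    (V : ℝ) (hV0 : 0 ≤ V) (v v' : ℝ → ℝ)
    (hper : Function.Periodic v 1) (hv : ∀ t, |v t| ≤ 1 / 3)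
    (hvd : ∀ t, HasDerivAt v (v' t) t) (hV : ∀ t, |v' t| ≤ V)
    (hV1 : ∀ ε : ℝ, 0 < ε → ε ≤ ε₀ → ∀ a : ℝ,
      ∃ F : Finset (Set ℝ), F.card ≤ s ∧
        (∀ J ∈ F, J.OrdConnected ∧ EMetric.diam J ≤ ENNReal.ofReal (ε ^ β)) ∧
        {x : ℝ | x ∈ Set.Ico (0 : ℝ) 1 ∧ |v x - a| < ε} = ⋃ J ∈ F, Int.fract '' J) :
    ∃ lam0 : ℝ, 0 < lam0 ∧
    ∀ lam E : ℝ, lam0 ≤ lam → |E| < lam / 2 →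
    ∀ b : ℕ, lam ^ 3 ≤ (b : ℝ) →
    ∀ m : ℕ, ∀ φ φ' : ℝ → ℝ,
      (∀ t ∈ Icc (0 : ℝ) 1, HasDerivWithinAt φ (φ' t) (Icc (0 : ℝ) 1) t) →
      (∀ t ∈ Icc (0 : ℝ) 1, |φ' t| <
        (lam * V / b) * ∑ i ∈ Finset.range (m + 1), (2 * lam ^ 2 / b) ^ i) →
    ((Finset.Icc 1 b).filter (fun j : ℕ =>
        ∃ x ∈ Icc (0 : ℝ) 1,
          |(lam * v ((x + j - 1) / b) - E) * Real.sin (φ ((x + j - 1) / b)) -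
              Real.cos (φ ((x + j - 1) / b))| <
            Real.sqrt lam * |Real.sin (φ ((x + j - 1) / b))|)).card ≤
      (s + 1) * (2 + ⌊(2 : ℝ) ^ β * lam ^ (-(β / 2)) * b⌋₊) := by
  refine ⟨4 + 5200 * (V + 1) ^ 2 + 4 / ε₀ ^ 2, by positivity, ?_⟩
  intro lam E hlam hE b hb m φ φ' hφd hφ'
  -- basic facts about lam
  have hVsq : (0:ℝ) ≤ 5200 * (V + 1) ^ 2 := by positivity
  have hεsq : (0:ℝ) ≤ 4 / ε₀ ^ 2 := by positivity
  have hlam4 : (4:ℝ) ≤ lam := by linarith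
  have hlam1 : (1:ℝ) ≤ lam := by linarith
  have hlampos : (0:ℝ) < lam := by linarith
  have hsqrt2 : (2:ℝ) ≤ Real.sqrt lam := by
    nlinarith [Real.sq_sqrt hlampos.le, Real.sqrt_nonneg lam]
  have hsqrtpos : (0:ℝ) < Real.sqrt lam := by linarith
  have hsqrt_le : Real.sqrt lam ≤ lam := by
    nlinarith [Real.sq_sqrt hlampos.le, Real.sqrt_nonneg lam]
  have h12V : 12 * V ≤ lam := by nlinarith
  have h72V : 72 * V ≤ Real.sqrt lam := by
    nlinarith [Real.sq_sqrt hlampos.le, Real.sqrt_nonneg lam]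
  have hbpos : (0:ℝ) < b := by nlinarith [pow_pos hlampos 3]
  have hbn : 1 ≤ b := by exact_mod_cast Nat.one_le_iff_ne_zero.mpr (by
    rintro rfl; simp at hbpos)
  -- derivative bound for φ
  have hφ'2 : ∀ t ∈ Icc (0:ℝ) 1, |φ' t| ≤ 2 * lam * V / b := by
    intro t ht
    have hr0 : (0:ℝ) ≤ 2 * lam ^ 2 / b := by positivity
    have hr2 : 2 * lam ^ 2 / b ≤ 1 / 2 := by
      rw [div_le_iff₀ hbpos]
      nlinarith [hb, mul_nonneg (show (0:ℝ) ≤ lam - 4 by linarith) (sq_nonneg lam)]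
    have hsum0 : (0:ℝ) ≤ ∑ i ∈ Finset.range (m+1), (2 * lam ^ 2 / b) ^ i :=
      Finset.sum_nonneg fun i _ => pow_nonneg hr0 i
    have hsum : ∑ i ∈ Finset.range (m+1), (2 * lam ^ 2 / b) ^ i ≤ 2 := by
      have hgm := geom_sum_mul (2 * lam ^ 2 / (b:ℝ)) (m+1)
      have hpow : (0:ℝ) ≤ (2 * lam ^ 2 / b) ^ (m+1) := pow_nonneg hr0 _
      nlinarith [hsum0]
    have hc : (0:ℝ) ≤ lam * V / b := by positivity
    calc |φ' t| ≤ (lam * V / b) * ∑ i ∈ Finset.range (m+1), (2 * lam ^ 2 / b) ^ i :=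
          (hφ' t ht).le
      _ ≤ (lam * V / b) * 2 := mul_le_mul_of_nonneg_left hsum hc
      _ = 2 * lam * V / b := by ring
  -- variation of φ
  have hvar : ∀ t ∈ Icc (0:ℝ) 1, ∀ u ∈ Icc (0:ℝ) 1, |φ t - φ u| ≤ 2 * V / lam ^ 2 := by
    intro t ht u hu
    have hC : ∀ x ∈ Icc (0:ℝ) 1, ‖φ' x‖ ≤ 2 * lam * V / b := by
      intro x hx; rw [Real.norm_eq_abs]; exact hφ'2 x hx
    have hmvt := Convex.norm_image_sub_le_of_norm_hasDerivWithin_le hφd hC (convex_Icc 0 1) hu ht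
    rw [Real.norm_eq_abs, Real.norm_eq_abs] at hmvt
    have htu : |t - u| ≤ 1 := by
      obtain ⟨h1, h2⟩ := ht; obtain ⟨h3, h4⟩ := hu
      rw [abs_le]; constructor <;> linarith
    have hCpos : (0:ℝ) ≤ 2 * lam * V / b := by positivity
    have hCb : 2 * lam * V / b ≤ 2 * V / lam ^ 2 := by
      rw [div_le_div_iff₀ hbpos (by positivity)]
      nlinarith [mul_le_mul_of_nonneg_left hb (by positivity : (0:ℝ) ≤ 2 * V)]
    calc |φ t - φ u| ≤ 2 * lam * V / b * |t - u| := hmvt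
      _ ≤ 2 * lam * V / b * 1 := mul_le_mul_of_nonneg_left htu hCpos
      _ ≤ 2 * V / lam ^ 2 := by linarith
  -- pointwise consequence of the smallness condition
  have key : ∀ u ∈ Icc (0:ℝ) 1,
      |(lam * v u - E) * Real.sin (φ u) - Real.cos (φ u)| <
        Real.sqrt lam * |Real.sin (φ u)| →
      1 / (3 * lam) ≤ |Real.sin (φ u)| ∧
        |lam * v u - E - Real.cos (φ u) / Real.sin (φ u)| < Real.sqrt lam := by
    intro u hu hcond
    set P := lam * v u - E with hPdef
    set sθ := Real.sin (φ u) with hsdef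
    set cθ := Real.cos (φ u) with hcdef
    have hpyth : sθ ^ 2 + cθ ^ 2 = 1 := Real.sin_sq_add_cos_sq (φ u)
    have hPb : |P| ≤ 5 * lam / 6 := by
      have h1 : |lam * v u| ≤ lam / 3 := by
        rw [abs_mul, abs_of_pos hlampos]
        nlinarith [hv u, abs_nonneg (v u)]
      calc |P| ≤ |lam * v u| + |E| := abs_sub _ _
        _ ≤ 5 * lam / 6 := by linarith [hE]
    have hs0 : sθ ≠ 0 := by
      intro h
      rw [h, abs_zero, mul_zero, mul_zero] at hcond
      exact absurd hcond (not_lt.mpr (abs_nonneg _))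
    have hcb : |cθ| ≤ 2 * lam * |sθ| := by
      have h1 : |cθ| ≤ |P * sθ - cθ| + |P| * |sθ| := by
        calc |cθ| = |(P * sθ - cθ) - P * sθ| := by ring_nf; rw [abs_neg]
          _ ≤ |P * sθ - cθ| + |P * sθ| := abs_sub _ _
          _ = |P * sθ - cθ| + |P| * |sθ| := by rw [abs_mul]
      nlinarith [abs_nonneg sθ, hsqrt_le, hPb, hcond, abs_nonneg P]
    have habs : 1 / (3 * lam) ≤ |sθ| := by
      have h3 := mul_self_le_mul_self (abs_nonneg cθ) hcb
      have h4 : 1 ≤ 9 * lam ^ 2 * sθ ^ 2 := by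
        have hA : cθ ^ 2 ≤ 4 * lam ^ 2 * sθ ^ 2 := by nlinarith [sq_abs cθ, sq_abs sθ, h3]
        have hB : (0:ℝ) ≤ (lam ^ 2 - 1) * sθ ^ 2 := mul_nonneg (by nlinarith) (sq_nonneg _)
        nlinarith [hpyth, hA, hB, sq_nonneg (lam * sθ)]
      rw [div_le_iff₀ (by positivity)]
      by_contra hcon
      push_neg at hcon
      have ht0 : (0:ℝ) ≤ |sθ| * (3 * lam) := by positivity
      nlinarith [h4, sq_abs sθ]
    refine ⟨habs, ?_⟩
    have h5 : P - cθ / sθ = (P * sθ - cθ) / sθ := by field_simp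
    rw [h5, abs_div, div_lt_iff₀ (abs_pos.mpr hs0)]
    exact hcond
  set Bad := (Finset.Icc 1 b).filter (fun j : ℕ =>
        ∃ x ∈ Icc (0 : ℝ) 1,
          |(lam * v ((x + j - 1) / b) - E) * Real.sin (φ ((x + j - 1) / b)) -
              Real.cos (φ ((x + j - 1) / b))| <
            Real.sqrt lam * |Real.sin (φ ((x + j - 1) / b))|) with hBadDef
  rcases Bad.eq_empty_or_nonempty with hBE | ⟨j₀, hj₀⟩
  · rw [hBE]; simp
  -- the witness point for j₀
  obtain ⟨hj₀b, x₀, hx₀, hcond₀⟩ := Finset.mem_filter.mp hj₀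
  set y₀ : ℝ := (x₀ + j₀ - 1) / b with hy₀def
  have hymem : ∀ j ∈ Finset.Icc 1 b, ∀ x ∈ Icc (0:ℝ) 1,
      (x + j - 1) / b ∈ Icc (0:ℝ) 1 ∧
      ((j:ℝ) - 1) ≤ b * ((x + j - 1) / b) ∧ b * ((x + j - 1) / b) ≤ j := by
    intro j hj x hx
    obtain ⟨hj1, hjb⟩ := Finset.mem_Icc.mp hj
    obtain ⟨hx0, hx1⟩ := hx
    have hj1' : (1:ℝ) ≤ j := by exact_mod_cast hj1
    have hjb' : (j:ℝ) ≤ b := by exact_mod_cast hjb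
    have hmul : b * ((x + j - 1) / b) = x + j - 1 := by field_simp
    constructor
    · constructor
      · exact div_nonneg (by linarith) hbpos.le
      · rw [div_le_one hbpos]; linarith
    · rw [hmul]; constructor <;> linarith
  have hy₀m : y₀ ∈ Icc (0:ℝ) 1 := (hymem j₀ hj₀b x₀ hx₀).1
  have hkey₀ := key y₀ hy₀m hcond₀
  -- sin is bounded below everywhere
  have hsinlb : ∀ t ∈ Icc (0:ℝ) 1, 1 / (6 * lam) ≤ |Real.sin (φ t)| := by
    intro t ht
    have h1 := hvar t ht y₀ hy₀m
    have h2 := sin_lip_aux (φ t) (φ y₀)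
    have h3 : 2 * V / lam ^ 2 ≤ 1 / (6 * lam) := by
      rw [div_le_div_iff₀ (by positivity) (by positivity)]
      nlinarith [mul_le_mul_of_nonneg_right h12V hlampos.le]
    have h4 := hkey₀.1
    have h5 : |Real.sin (φ y₀)| - |Real.sin (φ t)| ≤ |Real.sin (φ t) - Real.sin (φ y₀)| := by
      rw [abs_sub_comm]
      exact abs_sub_abs_le_abs_sub _ _
    have heq : 1 / (6 * lam) + 1 / (6 * lam) = 1 / (3 * lam) := by
      field_simp
      ring
    linarith
  -- the cotangent function
  set g : ℝ → ℝ := fun t => Real.cos (φ t) / Real.sin (φ t) with hgdef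
  have hsne : ∀ t ∈ Icc (0:ℝ) 1, Real.sin (φ t) ≠ 0 := by
    intro t ht h
    have h1 := hsinlb t ht
    rw [h, abs_zero] at h1
    have : (0:ℝ) < 1 / (6 * lam) := by positivity
    linarith
  have hgd : ∀ t ∈ Icc (0:ℝ) 1, HasDerivWithinAt g
      ((-Real.sin (φ t) * Real.sin (φ t) - Real.cos (φ t) * Real.cos (φ t)) /
        (Real.sin (φ t)) ^ 2 * φ' t) (Icc (0:ℝ) 1) t := by
    intro t ht
    have hc : HasDerivAt (fun θ => Real.cos θ / Real.sin θ)
        ((-Real.sin (φ t) * Real.sin (φ t) - Real.cos (φ t) * Real.cos (φ t)) /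
          (Real.sin (φ t)) ^ 2) (φ t) :=
      (Real.hasDerivAt_cos (φ t)).div (Real.hasDerivAt_sin (φ t)) (hsne t ht)
    exact hc.comp_hasDerivWithinAt t (hφd t ht)
  have hgvar : ∀ t ∈ Icc (0:ℝ) 1, ∀ u ∈ Icc (0:ℝ) 1, |g t - g u| ≤ 72 * V := by
    have hgb : ∀ t ∈ Icc (0:ℝ) 1,
        ‖(-Real.sin (φ t) * Real.sin (φ t) - Real.cos (φ t) * Real.cos (φ t)) /
          (Real.sin (φ t)) ^ 2 * φ' t‖ ≤ 72 * V := by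
      intro t ht
      have hsl := hsinlb t ht
      have hnum : -Real.sin (φ t) * Real.sin (φ t) - Real.cos (φ t) * Real.cos (φ t) = -1 := by
        have := Real.sin_sq_add_cos_sq (φ t); nlinarith
      rw [hnum, Real.norm_eq_abs, abs_mul, abs_div, abs_neg, abs_one,
        abs_of_nonneg (sq_nonneg (Real.sin (φ t)))]
      have hs2 : 1 / (36 * lam ^ 2) ≤ (Real.sin (φ t)) ^ 2 := by
        calc 1 / (36 * lam ^ 2) = (1 / (6 * lam)) ^ 2 := by ring
          _ ≤ |Real.sin (φ t)| ^ 2 := pow_le_pow_left₀ (by positivity) hsl 2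
          _ = (Real.sin (φ t)) ^ 2 := sq_abs _
      have hs2pos : (0:ℝ) < (Real.sin (φ t)) ^ 2 := lt_of_lt_of_le (by positivity) hs2
      have hs2' : 1 ≤ (Real.sin (φ t)) ^ 2 * (36 * lam ^ 2) := (div_le_iff₀ (by positivity)).mp hs2
      have h6 : 1 / (Real.sin (φ t)) ^ 2 ≤ 36 * lam ^ 2 := by
        rw [div_le_iff₀ hs2pos]; linarith
      have hφb := hφ'2 t ht
      have h8 : 72 * lam ^ 3 * V / b ≤ 72 * V := by
        rw [div_le_iff₀ hbpos]
        nlinarith [mul_le_mul_of_nonneg_left hb (by positivity : (0:ℝ) ≤ 72 * V)]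
      calc 1 / (Real.sin (φ t)) ^ 2 * |φ' t| ≤ 36 * lam ^ 2 * (2 * lam * V / b) :=
            mul_le_mul h6 hφb (abs_nonneg _) (by positivity)
        _ = 72 * lam ^ 3 * V / b := by ring
        _ ≤ 72 * V := h8
    intro t ht u hu
    have hmvt := Convex.norm_image_sub_le_of_norm_hasDerivWithin_le hgd hgb (convex_Icc 0 1) hu ht
    rw [Real.norm_eq_abs, Real.norm_eq_abs] at hmvt
    have htu : |t - u| ≤ 1 := by
      obtain ⟨h1, h2⟩ := ht; obtain ⟨h3, h4⟩ := hu
      rw [abs_le]; constructor <;> linarith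
    have h72 : (0:ℝ) ≤ 72 * V := by positivity
    calc |g t - g u| ≤ 72 * V * |t - u| := hmvt
      _ ≤ 72 * V * 1 := mul_le_mul_of_nonneg_left htu h72
      _ = 72 * V := by ring
  set a : ℝ := g y₀ with hadef
  -- all bad points are in a level set of v
  have hbad : ∀ j ∈ Bad, ∀ x ∈ Icc (0:ℝ) 1,
      |(lam * v ((x + j - 1) / b) - E) * Real.sin (φ ((x + j - 1) / b)) -
          Real.cos (φ ((x + j - 1) / b))| <
        Real.sqrt lam * |Real.sin (φ ((x + j - 1) / b))| →
      |v ((x + j - 1) / b) - (E + a) / lam| < 2 / Real.sqrt lam := by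
    intro j hj x hx hc
    have hym : (x + j - 1) / b ∈ Icc (0:ℝ) 1 :=
      (hymem j (Finset.mem_filter.mp hj).1 x hx).1
    set y : ℝ := (x + (j:ℝ) - 1) / b with hydef
    have hk := key y hym hc
    have hk2 : |lam * v y - E - g y| < Real.sqrt lam := by
      simp only [hgdef]; exact hk.2
    have hg1 : |g y - a| ≤ 72 * V := hgvar y hym y₀ hy₀m
    have h1 : |lam * v y - (E + a)| < 2 * Real.sqrt lam := by
      have heq : lam * v y - (E + a) = (lam * v y - E - g y) + (g y - a) := by ring
      calc |lam * v y - (E + a)| ≤ |lam * v y - E - g y| + |g y - a| := by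
            rw [heq]; exact abs_add_le _ _
        _ < 2 * Real.sqrt lam := by linarith [h72V]
    have h4 : v y - (E + a) / lam = (lam * v y - (E + a)) / lam := by
      field_simp
    rw [h4, abs_div, abs_of_pos hlampos, div_lt_div_iff₀ hlampos hsqrtpos]
    calc |lam * v y - (E + a)| * Real.sqrt lam < 2 * Real.sqrt lam * Real.sqrt lam :=
          mul_lt_mul_of_pos_right h1 hsqrtpos
      _ = 2 * lam := by rw [mul_assoc, Real.mul_self_sqrt hlampos.le]
  -- apply the hypothesis hV1
  have hεpos : (0:ℝ) < 2 / Real.sqrt lam := by positivity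
  have hεle : 2 / Real.sqrt lam ≤ ε₀ := by
    rw [div_le_iff₀ hsqrtpos]
    have h0 : (0:ℝ) < ε₀ ^ 2 := by positivity
    have h1 : 4 ≤ lam * ε₀ ^ 2 := by
      have h2 := (div_le_iff₀ h0).mp (show 4 / ε₀ ^ 2 ≤ lam by linarith only [hlam, hVsq])
      linarith only [h2]
    by_contra hcon
    push_neg at hcon
    have ht0 : 0 ≤ ε₀ * Real.sqrt lam := mul_nonneg hε₀.le (Real.sqrt_nonneg lam)
    have h3 : (ε₀ * Real.sqrt lam) ^ 2 < 2 ^ 2 := pow_lt_pow_left₀ hcon ht0 two_ne_zero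
    rw [mul_pow, Real.sq_sqrt hlampos.le] at h3
    norm_num at h3
    nlinarith only [h1, h3]
  obtain ⟨F, hFcard, hFJ, hFeq⟩ := hV1 (2 / Real.sqrt lam) hεpos hεle ((E + a) / lam)
  -- the diameter bound
  set d : ℝ := (2 / Real.sqrt lam) ^ β with hddef
  have hdpos : 0 < d := Real.rpow_pos_of_pos hεpos β
  -- witnesses for bad indices other than b
  have hwit : ∀ j : ℕ, ∃ J : Set ℝ, ∃ t : ℝ,
      j ∈ Bad.erase b → J ∈ F ∧ t ∈ J ∧
        ((j:ℝ) - 1) ≤ b * Int.fract t ∧ b * Int.fract t ≤ j := by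
    intro j
    by_cases hjB : j ∈ Bad.erase b
    · have hjne : j ≠ b := Finset.ne_of_mem_erase hjB
      have hjB' : j ∈ Bad := Finset.mem_of_mem_erase hjB
      obtain ⟨hjI, x, hx, hc⟩ := Finset.mem_filter.mp hjB'
      obtain ⟨hym, hy1, hy2⟩ := hymem j hjI x hx
      have hylt : (x + j - 1) / b < 1 := by
        obtain ⟨hj1, hjb⟩ := Finset.mem_Icc.mp hjI
        have hjb' : j + 1 ≤ b := by omega
        have hjb'' : (j:ℝ) + 1 ≤ b := by exact_mod_cast hjb'
        rw [div_lt_one hbpos]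
        linarith only [hx.2, hjb'']
      have hvy : |v ((x + j - 1) / b) - (E + a) / lam| < 2 / Real.sqrt lam :=
        hbad j hjB' x hx hc
      have hymem' : (x + j - 1) / b ∈
          {z : ℝ | z ∈ Ico (0:ℝ) 1 ∧ |v z - (E + a) / lam| < 2 / Real.sqrt lam} :=
        ⟨⟨hym.1, hylt⟩, hvy⟩
      rw [hFeq] at hymem'
      simp only [mem_iUnion, Set.mem_image] at hymem'
      obtain ⟨J, hJF, t, htJ, htf⟩ := hymem'
      refine ⟨J, t, fun _ => ⟨hJF, htJ, ?_, ?_⟩⟩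
      · rw [htf]; exact hy1
      · rw [htf]; exact hy2
    · exact ⟨∅, 0, fun h => absurd h hjB⟩
  choose Jf tf hwit' using hwit
  -- per-fiber counting
  have hper' : ∀ J ∈ F,
      ((Bad.erase b).filter (fun j => Jf j = J)).card ≤ ⌊(b:ℝ) * d⌋₊ + 2 := by
    intro J hJ
    set T := (Bad.erase b).filter (fun j => Jf j = J) with hTdef
    have hmemT : ∀ j ∈ T, j ∈ Bad.erase b ∧ Jf j = J := fun j hj => Finset.mem_filter.mp hj
    have hrange : ∀ j ∈ T, 1 ≤ j ∧ j + 1 ≤ b := by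
      intro j hj
      obtain ⟨hj1, hj2⟩ := hmemT j hj
      have hne := Finset.ne_of_mem_erase hj1
      have hmem := Finset.mem_of_mem_erase hj1
      have := Finset.mem_Icc.mp (Finset.mem_filter.mp hmem).1
      omega
    have hbr : ∀ j ∈ T, tf j ∈ J ∧ ((j:ℝ) - 1) ≤ b * Int.fract (tf j) ∧
        b * Int.fract (tf j) ≤ j := by
      intro j hj
      obtain ⟨hj1, hj2⟩ := hmemT j hj
      obtain ⟨_, ht, h1, h2⟩ := hwit' j hj1
      exact ⟨hj2 ▸ ht, h1, h2⟩
    have hdist : ∀ j ∈ T, ∀ j' ∈ T, dist (tf j) (tf j') ≤ d := by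
      intro j hj j' hj'
      have hed := EMetric.edist_le_diam_of_mem (hbr j hj).1 (hbr j' hj').1
      have := le_trans hed (hFJ J hJ).2
      rw [edist_dist] at this
      exact (ENNReal.ofReal_le_ofReal_iff hdpos.le).mp this
    have hb1 : (1:ℤ) ≤ b := by exact_mod_cast hbn
    have hinj : Set.InjOn (fun j : ℕ => (j : ℤ) + b * ⌊tf j⌋) ↑T := by
      intro j hj j' hj' hk
      simp only [Finset.mem_coe] at hj hj'
      simp only at hk
      have hz : (j:ℤ) - j' = (b:ℤ) * (⌊tf j'⌋ - ⌊tf j⌋) := by linear_combination hk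
      obtain ⟨ha1, ha2⟩ := hrange j hj
      obtain ⟨hb1', hb2'⟩ := hrange j' hj'
      have hja1 : (1:ℤ) ≤ j := by exact_mod_cast ha1
      have hja2 : (j:ℤ) + 1 ≤ b := by exact_mod_cast ha2
      have hjb1 : (1:ℤ) ≤ j' := by exact_mod_cast hb1'
      have hjb2 : (j':ℤ) + 1 ≤ b := by exact_mod_cast hb2'
      rcases lt_trichotomy (⌊tf j'⌋ - ⌊tf j⌋ : ℤ) 0 with h | h | h
      · have h1 : (⌊tf j'⌋ - ⌊tf j⌋ : ℤ) ≤ -1 := by omega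
        have h2 : (b:ℤ) * (⌊tf j'⌋ - ⌊tf j⌋) ≤ b * (-1) :=
          mul_le_mul_of_nonneg_left h1 (by omega)
        have : (j:ℕ) = j' := by omega
        exact_mod_cast this
      · rw [h, mul_zero] at hz
        have : (j:ℕ) = j' := by omega
        exact_mod_cast this
      · have h1 : (1:ℤ) ≤ ⌊tf j'⌋ - ⌊tf j⌋ := by omega
        have h2 : (b:ℤ) * 1 ≤ b * (⌊tf j'⌋ - ⌊tf j⌋) :=
          mul_le_mul_of_nonneg_left h1 (by omega)
        have : (j:ℕ) = j' := by omega
        exact_mod_cast this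
    have hcardT : T.card = (T.image (fun j : ℕ => (j : ℤ) + b * ⌊tf j⌋)).card :=
      (Finset.card_image_of_injOn hinj).symm
    have hwindow : ∀ j ∈ T, ((j:ℝ) + b * ⌊tf j⌋ : ℝ) ∈
        Icc ((b:ℝ) * tf j) ((b:ℝ) * tf j + 1) := by
      intro j hj
      obtain ⟨_, h1, h2⟩ := hbr j hj
      have hsplit : (tf j : ℝ) = ⌊tf j⌋ + Int.fract (tf j) := (Int.floor_add_fract _).symm
      constructor
      · nlinarith only [h1, h2, hsplit]
      · nlinarith only [h1, h2, hsplit]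
    have hSb : ∀ p ∈ T.image (fun j : ℕ => (j : ℤ) + b * ⌊tf j⌋),
        ∀ q ∈ T.image (fun j : ℕ => (j : ℤ) + b * ⌊tf j⌋),
        (p:ℝ) - q ≤ (b:ℝ) * d + 1 := by
      intro p hp q hq
      obtain ⟨j, hj, rfl⟩ := Finset.mem_image.mp hp
      obtain ⟨j', hj', rfl⟩ := Finset.mem_image.mp hq
      obtain ⟨hw1, hw2⟩ := hwindow j hj
      obtain ⟨hw1', hw2'⟩ := hwindow j' hj'
      have hd1 : (b:ℝ) * tf j - b * tf j' ≤ b * d := by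
        have := hdist j hj j' hj'
        rw [Real.dist_eq] at this
        have habs := le_abs_self (tf j - tf j')
        nlinarith only [this, habs, hbpos]
      have hcast : (((j:ℤ) + b * ⌊tf j⌋ : ℤ) : ℝ) = (j:ℝ) + (b:ℝ) * (⌊tf j⌋ : ℝ) := by
        push_cast; ring
      have hcast' : (((j':ℤ) + b * ⌊tf j'⌋ : ℤ) : ℝ) = (j':ℝ) + (b:ℝ) * (⌊tf j'⌋ : ℝ) := by
        push_cast; ring
      rw [hcast, hcast']
      linarith only [hw1, hw2, hw1', hw2', hd1]
    have hkey2 := int_card_le_aux (T.image (fun j : ℕ => (j : ℤ) + b * ⌊tf j⌋))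
      ((b:ℝ) * d + 1) (by positivity) hSb
    rw [Nat.floor_add_one (by positivity)] at hkey2
    omega
  -- putting it together
  have hcard1 : (Bad.erase b).card = ∑ J ∈ F, ((Bad.erase b).filter (fun j => Jf j = J)).card :=
    Finset.card_eq_sum_card_fiberwise (fun j hj => (hwit' j hj).1)
  have hcard2 : (Bad.erase b).card ≤ s * (⌊(b:ℝ) * d⌋₊ + 2) := by
    rw [hcard1]
    calc ∑ J ∈ F, ((Bad.erase b).filter (fun j => Jf j = J)).card
        ≤ ∑ J ∈ F, (⌊(b:ℝ) * d⌋₊ + 2) := Finset.sum_le_sum hper'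
      _ = F.card * (⌊(b:ℝ) * d⌋₊ + 2) := by rw [Finset.sum_const, smul_eq_mul]
      _ ≤ s * (⌊(b:ℝ) * d⌋₊ + 2) := Nat.mul_le_mul_right _ hFcard
  have hcard3 : Bad.card ≤ (Bad.erase b).card + 1 := by
    rcases em (b ∈ Bad) with h | h
    · have := Finset.card_erase_add_one h
      omega
    · rw [Finset.erase_eq_of_notMem h]; omega
  -- identify the floor
  have hfloor : ⌊(b:ℝ) * d⌋₊ = ⌊(2 : ℝ) ^ β * lam ^ (-(β / 2)) * b⌋₊ := by
    have hd2 : d = (2:ℝ) ^ β * lam ^ (-(β / 2)) := by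
      rw [hddef, Real.sqrt_eq_rpow,
        Real.div_rpow (by norm_num) (Real.rpow_nonneg hlampos.le _),
        ← Real.rpow_mul hlampos.le, show (1:ℝ)/2*β = β/2 by ring,
        Real.rpow_neg hlampos.le, div_eq_mul_inv]
    rw [hd2]
    congr 1
    ring
  have hfinal : Bad.card ≤ (s + 1) * (2 + ⌊(b:ℝ) * d⌋₊) := by
    calc Bad.card ≤ (Bad.erase b).card + 1 := hcard3
      _ ≤ s * (⌊(b:ℝ) * d⌋₊ + 2) + 1 := Nat.add_le_add_right hcard2 1
      _ ≤ s * (⌊(b:ℝ) * d⌋₊ + 2) + (2 + ⌊(b:ℝ) * d⌋₊) :=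
          Nat.add_le_add_left (by omega) _
      _ = (s + 1) * (2 + ⌊(b:ℝ) * d⌋₊) := by ring
  rw [hfloor] at hfinal
  exact hfinal
end
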